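/- arXiv:1309.6103 — 7 statements merged into one kernel-verified Lean document; each statement's English description precedes it below -/
import Mathlib

section
/- Let f : G → ℂ be continuous and Γ-left-invariant (f(γg) = f(g) for all γ ∈ Γ, g ∈ G). Then for every T ∈ SL(2,ℤ), every M ∈ SL(2,ℝ) and every m ∈ ℤ²: f̂(TM, m) = f̂(M, m·ᵗT⁻¹), where ᵗT⁻¹ is the transpose of T⁻¹ acting on the row vector m on the right (note m·ᵗT⁻¹ ∈ ℤ²). In particular, for every n ∈ ℤ the function f̃_n satisfies f̃_n([[1,x],[0,1]]·M) = f̃_n(M) for all x ∈ ℤ and M ∈ SL(2,ℝ), and f̃₀(T·M) = f̃₀(M) for all T ∈ SL(2,ℤ) and M ∈ SL(2,ℝ). -/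
open MeasureTheory Real Matrix Set
open scoped ENNReal

noncomputable section

instance : MeasurableSpace (Matrix (Fin 2) (Fin 2) ℝ) := borel _
instance : BorelSpace (Matrix (Fin 2) (Fin 2) ℝ) := ⟨rfl⟩

/-- The ambient space containing the group `G = SL(2,ℝ) ⋉ ℝ²` (pairs of a `2×2`
real matrix and a row vector). -/
abbrev GG : Type := Matrix (Fin 2) (Fin 2) ℝ × (Fin 2 → ℝ)

/-- The multiplication law `(M,v)(M',v') = (MM', vM' + v')`. -/
def gmul (g h : GG) : GG := (g.1 * h.1, Matrix.vecMul g.2 h.1 + h.2)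

/-- `G`, i.e. the set of pairs whose matrix part has determinant one. -/
def GSet : Set GG := {g | g.1.det = 1}

/-- `Γ = SL(2,ℤ) ⋉ ℤ²`. -/
def GammaSet : Set GG :=
  {g | g.1.det = 1 ∧ (∀ i j, ∃ n : ℤ, g.1 i j = (n : ℝ)) ∧ ∀ i, ∃ n : ℤ, g.2 i = (n : ℝ)}

/-- `U^x`. -/
def uElt (x : ℝ) : GG := (!![1, x; 0, 1], 0)

/-- `a(y)`. -/
def aElt (y : ℝ) : GG := (!![Real.sqrt y, 0; 0, (Real.sqrt y)⁻¹], 0)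

/-- `(1₂, ξ)`. -/
def transl (ξ : Fin 2 → ℝ) : GG := (1, ξ)

/-- The five one-parameter subgroups `e₁,…,e₅`. -/
def eFlow : Fin 5 → ℝ → GG :=
  ![fun t => (!![1, t; 0, 1], 0),
    fun t => (!![1, 0; t, 1], 0),
    fun t => (!![Real.exp t, 0; 0, Real.exp (-t)], 0),
    fun t => (1, ![t, 0]),
    fun t => (1, ![0, t])]

/-- Left invariant derivative in the direction `e_i`. -/
def Dder (i : Fin 5) (F : GG → ℝ) : GG → ℝ :=
  fun g => deriv (fun t : ℝ => F (gmul g (eFlow i t))) 0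

/-- Iterated left invariant derivative `D_w` associated to a word `w`. -/
def Dword : List (Fin 5) → (GG → ℝ) → GG → ℝ
  | [], F => F
  | i :: w, F => Dder i (Dword w F)

/-- `f ∈ C_b^k(Γ\G)` : `f` is `Γ`-left-invariant and all its left invariant
derivatives of order `≤ k` exist on `G`, are continuous and bounded there. -/
def InCb (k : ℕ) (f : GG → ℝ) : Prop :=
  (∀ γ ∈ GammaSet, ∀ g ∈ GSet, f (gmul γ g) = f g) ∧
  (∀ w : List (Fin 5), w.length ≤ k →
      ContinuousOn (Dword w f) GSet ∧ ∃ B : ℝ, ∀ g ∈ GSet, |Dword w f g| ≤ B) ∧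
  (∀ (i : Fin 5) (w : List (Fin 5)), (i :: w).length ≤ k → ∀ g ∈ GSet,
      DifferentiableAt ℝ (fun t : ℝ => Dword w f (gmul g (eFlow i t))) 0)

/-- The norm `‖f‖_{C_b^k} = ∑_w sup_{g ∈ G} |D_w f(g)|`, summed over all words of
length `≤ k`. -/
def CbNorm (k : ℕ) (f : GG → ℝ) : ℝ :=
  ∑ n ∈ Finset.range (k + 1), ∑ w : Fin n → Fin 5,
    ⨆ g : GSet, |Dword (List.ofFn w) f (g : GG)|

/-- `ν` is a left Haar measure on `G` (viewed as a measure on the ambient space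
which is concentrated on `GSet`): left invariant, finite on compacts and positive
on nonempty relatively open subsets of `G`. -/
def IsHaarOnG (ν : Measure GG) : Prop :=
  ν GSetᶜ = 0 ∧
  (∀ g ∈ GSet, MeasurePreserving (fun h => gmul g h) ν ν) ∧
  (∀ K : Set GG, IsCompact K → ν K < ⊤) ∧
  (∀ U : Set GG, IsOpen U → (U ∩ GSet).Nonempty → 0 < ν U)

/-- `F` is a `ν`-measurable fundamental domain for the left action of `Γ` on `G`. -/
def IsFundDom (ν : Measure GG) (F : Set GG) : Prop :=
  MeasurableSet F ∧ F ⊆ GSet ∧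
  ν (GSet \ ⋃ γ ∈ GammaSet, gmul γ '' F) = 0 ∧
  ∀ γ₁ ∈ GammaSet, ∀ γ₂ ∈ GammaSet, γ₁ ≠ γ₂ → ν (gmul γ₁ '' F ∩ gmul γ₂ '' F) = 0

/-- `∫_X f dμ = ν(F)⁻¹ ∫_F f dν`. -/
def XAvg (ν : Measure GG) (F : Set GG) (f : GG → ℝ) : ℝ :=
  (ν F).toReal⁻¹ * ∫ g in F, f g ∂ν

/-- `⟨x⟩`, the distance from `x` to the nearest integer. -/
def nint (x : ℝ) : ℝ := |x - (round x : ℝ)|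

/-- The majorant `b_{ξ,L}(y)`, computed in `[0,∞]` with the convention `a/0 = ∞`. -/
def bMajE (ξ : Fin 2 → ℝ) (L y : ℝ) : ℝ≥0∞ :=
  ⨆ q : ℕ+, min (min (ENNReal.ofReal (1 / (q : ℝ) ^ 2))
      (ENNReal.ofReal (Real.sqrt y) / ENNReal.ofReal (L * (q : ℝ) * nint ((q : ℝ) * ξ 0))))
    (ENNReal.ofReal (Real.sqrt y) / ENNReal.ofReal ((q : ℝ) * nint ((q : ℝ) * ξ 1)))

/-- The majorant `b_{ξ,L}(y)` as a real number (it is always `≤ 1`). -/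
def bMaj (ξ : Fin 2 → ℝ) (L y : ℝ) : ℝ := (bMajE ξ L y).toReal

/-- The Euclidean norm on `ℝ²`. -/
def eNorm2 (v : Fin 2 → ℝ) : ℝ := Real.sqrt (v 0 ^ 2 + v 1 ^ 2)

/-- `ℓ(M)`: the Euclidean length of the shortest nonzero vector of `ℤ²M`. -/
def ellM (M : Matrix (Fin 2) (Fin 2) ℝ) : ℝ :=
  ⨅ m : {m : Fin 2 → ℤ // m ≠ 0}, eNorm2 (Matrix.vecMul (fun i => (m.1 i : ℝ)) M)

/-- `y_g(T) = T⁻¹ ℓ(g a(T))⁻²`. -/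
def ygT (g : GG) (T : ℝ) : ℝ := T⁻¹ * (ellM ((gmul g (aElt T)).1) ^ 2)⁻¹

/-- The set of `δ > 0` such that for all `1 ≤ q ≤ δ^{-1/2}`, the set `(q⁻¹ℤ²)g`
is disjoint from `(1/(δq²)) 𝔯_T`. -/
def bgSet (g : GG) (T : ℝ) : Set ℝ :=
  {δ | 0 < δ ∧ ∀ q : ℕ+, ((q : ℕ) : ℝ) ≤ (Real.sqrt δ)⁻¹ → ∀ m : Fin 2 → ℤ,
    ¬ (|Matrix.vecMul (fun i => (m i : ℝ) / ((q : ℕ) : ℝ)) g.1 0 + g.2 0| ≤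
          1 / (δ * ((q : ℕ) : ℝ) ^ 2 * T) ∧
       |Matrix.vecMul (fun i => (m i : ℝ) / ((q : ℕ) : ℝ)) g.1 1 + g.2 1| ≤
          1 / (δ * ((q : ℕ) : ℝ) ^ 2))}

/-- `b_g(T)`, computed in `[0,∞]` (it is `∞` if no `δ > 0` qualifies). -/
def bgE (g : GG) (T : ℝ) : ℝ≥0∞ := sInf (ENNReal.ofReal '' bgSet g T)

/-- The Sobolev norm `‖φ‖_{W^{k,1}}`. -/
def W11Norm (k : ℕ) (φ : ℝ → ℝ) : ℝ :=
  ∑ j ∈ Finset.range (k + 1), ∫ x : ℝ, |iteratedDeriv j φ x|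

/-- `𝔐̃_ξ(X) = ∑_{k≥1} σ(k) min(1/k², 1/(Xk⟨kξ⟩))`, a term with `⟨kξ⟩ = 0` being
read as `σ(k)/k²`. -/
def Mtilde (ξ X : ℝ) : ℝ :=
  ∑' k : ℕ+, (((k : ℕ).divisors.card : ℝ) *
    (if nint (((k : ℕ) : ℝ) * ξ) = 0 then 1 / ((k : ℕ) : ℝ) ^ 2
     else min (1 / ((k : ℕ) : ℝ) ^ 2) (1 / (X * ((k : ℕ) : ℝ) * nint (((k : ℕ) : ℝ) * ξ)))))

/-- `e(x) = e^{2πix}`. -/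
def e2πi (x : ℝ) : ℂ := Complex.exp (2 * (Real.pi : ℂ) * Complex.I * (x : ℂ))

/-- The Fourier coefficient `f̂(M,m)` of a `Γ`-invariant function on `G`. -/
def fhat (f : GG → ℂ) (M : Matrix (Fin 2) (Fin 2) ℝ) (m : Fin 2 → ℤ) : ℂ :=
  ∫ ξ in Set.univ.pi fun _ : Fin 2 => Set.Icc (0:ℝ) 1,
    f (gmul (transl ξ) (M, 0)) * e2πi (-(∑ i, (m i : ℝ) * ξ i))

/-- `f̃_n(M) = f̂(M,(n,0))`. -/
def ftilde (f : GG → ℂ) (n : ℤ) (M : Matrix (Fin 2) (Fin 2) ℝ) : ℂ := fhat f M ![n, 0]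

end

/-! Invariance of `f` under `(T, 0) ∈ Γ` turns the integrand of `f̂(TM, m)` at `ξ` into the
integrand of `f̂(M, m ᵗT⁻¹)` at `ξT`, and invariance under the translations `(1, ℓ)`, `ℓ ∈ ℤ²`,
makes the latter `ℤ²`-periodic. As `ξ ↦ ξT` preserves volume and maps `ℤ²` onto itself, it
carries the unit square to another fundamental domain of `ℤ²`, over which a periodic function
has the same integral. -/

section Lattice

variable {E ι F : Type*} [NormedAddCommGroup E] [NormedSpace ℝ E] [FiniteDimensional ℝ E]
  [MeasurableSpace E] [BorelSpace E] [Finite ι] [NormedAddCommGroup F] [NormedSpace ℝ F]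

theorem ZSpan.setIntegral_fundamentalDomain_comp_linearEquiv (b : Module.Basis ι ℝ E)
    {μ : Measure E} [μ.IsAddLeftInvariant] (φ : E ≃ₗ[ℝ] E) (hφ : MeasurePreserving φ μ μ)
    (hL : (Submodule.span ℤ (range b)).map (φ.restrictScalars ℤ : E →ₗ[ℤ] E) =
      Submodule.span ℤ (range b))
    {G : E → F} (hG : ∀ v ∈ Submodule.span ℤ (range b), ∀ x, G (v + x) = G x) :
    ∫ x in ZSpan.fundamentalDomain b, G (φ x) ∂μ = ∫ x in ZSpan.fundamentalDomain b, G x ∂μ := by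
  have hφ_emb : MeasurableEmbedding φ :=
    φ.toContinuousLinearEquiv.toHomeomorph.toMeasurableEquiv.measurableEmbedding
  have hfd : IsAddFundamentalDomain (Submodule.span ℤ (range b)).toAddSubgroup
      (φ '' ZSpan.fundamentalDomain b) μ := by
    have := ZSpan.isAddFundamentalDomain' (b.map φ) μ
    rwa [← ZSpan.map_fundamentalDomain, ← ZSpan.map, hL] at this
  have : Countable (Submodule.span ℤ (range b)).toAddSubgroup :=
    inferInstanceAs (Countable (Submodule.span ℤ (range b)))
  calc ∫ x in ZSpan.fundamentalDomain b, G (φ x) ∂μ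
      = ∫ x in φ ⁻¹' (φ '' ZSpan.fundamentalDomain b), G (φ x) ∂μ := by
        rw [φ.injective.preimage_image]
    _ = ∫ x in φ '' ZSpan.fundamentalDomain b, G x ∂μ := hφ.setIntegral_preimage_emb hφ_emb _ _
    _ = ∫ x in ZSpan.fundamentalDomain b, G x ∂μ :=
        hfd.setIntegral_eq (ZSpan.isAddFundamentalDomain' b μ) fun v x => hG v v.2 x

end Lattice

section IntMatrix

variable {ι : Type*} [Fintype ι]

theorem mem_span_pi_basisFun_iff {x : ι → ℝ} :
    x ∈ Submodule.span ℤ (range (Pi.basisFun ℝ ι)) ↔ ∃ m : ι → ℤ, Int.cast ∘ m = x := by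
  simp only [Module.Basis.mem_span_iff_repr_mem, Pi.basisFun_repr]
  exact ⟨fun h => ⟨fun i => (h i).choose, funext fun i => (h i).choose_spec⟩,
    fun ⟨m, hm⟩ i => ⟨m i, by simp [← hm]⟩⟩

theorem intCast_comp_mulVec (A : Matrix ι ι ℤ) (m : ι → ℤ) :
    Int.cast ∘ (A *ᵥ m) = A.map (Int.cast : ℤ → ℝ) *ᵥ (Int.cast ∘ m) :=
  funext (RingHom.map_mulVec (Int.castRingHom ℝ) A m)

theorem intCast_comp_vecMul (A : Matrix ι ι ℤ) (m : ι → ℤ) :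
    Int.cast ∘ (m ᵥ* A) = (Int.cast ∘ m) ᵥ* A.map (Int.cast : ℤ → ℝ) :=
  funext (RingHom.map_vecMul (Int.castRingHom ℝ) A m)

variable [DecidableEq ι]

theorem measurePreserving_intCast_mulVec {A : Matrix ι ι ℤ} (hA : IsUnit A.det) :
    MeasurePreserving (A.map (Int.cast : ℤ → ℝ) *ᵥ ·) := by
  have hdet : |(A.map (Int.cast : ℤ → ℝ)).det| = 1 := by
    rw [← Int.cast_det, ← Int.cast_abs, Int.isUnit_iff_abs_eq.mp hA, Int.cast_one]
  refine ⟨Continuous.measurable (by fun_prop), ?_⟩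
  have := Real.map_matrix_volume_pi_eq_smul_volume_pi (M := A.map (Int.cast : ℤ → ℝ))
    (by rw [← abs_ne_zero, hdet]; exact one_ne_zero)
  rwa [abs_inv, hdet, inv_one, ENNReal.ofReal_one, one_smul] at this

theorem map_span_pi_basisFun_eq_of_intCast_mulVec {A : Matrix ι ι ℤ} (hA : IsUnit A.det)
    (φ : (ι → ℝ) ≃ₗ[ℝ] ι → ℝ) (hφ : ∀ x, φ x = A.map Int.cast *ᵥ x) :
    (Submodule.span ℤ (range (Pi.basisFun ℝ ι))).map
      (φ.restrictScalars ℤ : (ι → ℝ) →ₗ[ℤ] ι → ℝ) = Submodule.span ℤ (range (Pi.basisFun ℝ ι)) := by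
  apply le_antisymm
  · rintro _ ⟨v, hv, rfl⟩
    obtain ⟨m, rfl⟩ := mem_span_pi_basisFun_iff.mp hv
    exact mem_span_pi_basisFun_iff.mpr ⟨A *ᵥ m, by simp [hφ, intCast_comp_mulVec]⟩
  · intro v hv
    obtain ⟨m, rfl⟩ := mem_span_pi_basisFun_iff.mp hv
    refine ⟨Int.cast ∘ (A⁻¹ *ᵥ m), mem_span_pi_basisFun_iff.mpr ⟨_, rfl⟩, ?_⟩
    simp [hφ, ← intCast_comp_mulVec, mulVec_mulVec, mul_nonsing_inv A hA]

theorem setIntegral_unitCube_comp_intCast_mulVec {F : Type*} [NormedAddCommGroup F]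
    [NormedSpace ℝ F] {A : Matrix ι ι ℤ} (hA : IsUnit A.det) {G : (ι → ℝ) → F}
    (hG : ∀ (m : ι → ℤ) x, G (Int.cast ∘ m + x) = G x) :
    ∫ x in univ.pi fun _ => Icc (0 : ℝ) 1, G (A.map Int.cast *ᵥ x) =
      ∫ x in univ.pi fun _ => Icc (0 : ℝ) 1, G x := by
  let := (A.map (Int.cast : ℤ → ℝ)).invertibleOfIsUnitDet
    (by rw [← Int.cast_det]; exact hA.map (Int.castRingHom ℝ))
  set φ := (A.map (Int.cast : ℤ → ℝ)).toLinearEquiv' this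
  have hφ : ∀ x, φ x = A.map Int.cast *ᵥ x := fun x => by
    rw [← LinearEquiv.coe_coe, Matrix.toLinearEquiv'_apply, Matrix.toLin'_apply]
  have hcube : (univ.pi fun _ : ι => Ico (0 : ℝ) 1) =ᵐ[volume] univ.pi fun _ => Icc 0 1 := by
    rw [pi_univ_Icc]
    exact Measure.univ_pi_Ico_ae_eq_Icc
  have := ZSpan.setIntegral_fundamentalDomain_comp_linearEquiv (Pi.basisFun ℝ ι) φ
    (by simpa only [← hφ] using measurePreserving_intCast_mulVec hA)
    (map_span_pi_basisFun_eq_of_intCast_mulVec hA φ hφ) (G := G) fun v hv x => by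
      obtain ⟨m, rfl⟩ := mem_span_pi_basisFun_iff.mp hv
      exact hG m x
  simpa only [ZSpan.fundamentalDomain_pi_basisFun, hφ, setIntegral_congr_set hcube] using this

theorem intCast_vecMul_inv_transpose_dotProduct_vecMul {T : Matrix ι ι ℤ} (hT : IsUnit T.det)
    (m : ι → ℤ) (ξ : ι → ℝ) :
    Int.cast ∘ (m ᵥ* (T⁻¹)ᵀ) ⬝ᵥ (ξ ᵥ* T.map Int.cast) = Int.cast ∘ m ⬝ᵥ ξ := by
  have hm : m ᵥ* (T⁻¹)ᵀ ᵥ* Tᵀ = m := by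
    rw [vecMul_vecMul, ← transpose_mul, mul_nonsing_inv T hT, transpose_one, vecMul_one]
  rw [← mulVec_transpose (T.map Int.cast) ξ, dotProduct_mulVec, ← transpose_map,
    ← intCast_comp_vecMul, hm]

end IntMatrix

theorem e2πi_add_intCast (x : ℝ) (n : ℤ) : e2πi (x + n) = e2πi x := by
  rw [e2πi, e2πi, Complex.ofReal_add, mul_add, Complex.exp_add, Complex.ofReal_intCast,
    show 2 * (π : ℂ) * Complex.I * n = n * (2 * π * Complex.I) by ring,
    Complex.exp_int_mul_two_pi_mul_I, mul_one]

theorem one_intCast_mem_GammaSet (ℓ : Fin 2 → ℤ) : ((1, Int.cast ∘ ℓ) : GG) ∈ GammaSet := by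
  refine ⟨det_one, fun i j => ⟨(1 : Matrix (Fin 2) (Fin 2) ℤ) i j, ?_⟩, fun i => ⟨ℓ i, rfl⟩⟩
  by_cases h : i = j <;> simp [one_apply, h]

theorem intCast_zero_mem_GammaSet {T : Matrix (Fin 2) (Fin 2) ℤ} (hT : T.det = 1) :
    ((T.map Int.cast, 0) : GG) ∈ GammaSet :=
  ⟨by rw [← Int.cast_det, hT, Int.cast_one], fun i j => ⟨T i j, rfl⟩, fun _ => ⟨0, by simp⟩⟩

theorem gmul_transl_mk (ξ : Fin 2 → ℝ) (M : Matrix (Fin 2) (Fin 2) ℝ) :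
    gmul (transl ξ) (M, 0) = (M, ξ ᵥ* M) := by
  simp [gmul, transl]

noncomputable def fhatIntegrand (f : GG → ℂ) (M : Matrix (Fin 2) (Fin 2) ℝ) (m : Fin 2 → ℤ)
    (ξ : Fin 2 → ℝ) : ℂ :=
  f (gmul (transl ξ) (M, 0)) * e2πi (-(∑ i, (m i : ℝ) * ξ i))

section Invariant

variable {f : GG → ℂ} (hf : ∀ γ ∈ GammaSet, ∀ g ∈ GSet, f (gmul γ g) = f g)
  {M : Matrix (Fin 2) (Fin 2) ℝ} (hM : M.det = 1)
include hf hM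

theorem fhatIntegrand_intCast_add (m ℓ : Fin 2 → ℤ) (ξ : Fin 2 → ℝ) :
    fhatIntegrand f M m (Int.cast ∘ ℓ + ξ) = fhatIntegrand f M m ξ := by
  have hf_shift : f (M, (Int.cast ∘ ℓ + ξ) ᵥ* M) = f (M, ξ ᵥ* M) := by
    simpa [gmul, add_vecMul] using hf _ (one_intCast_mem_GammaSet ℓ) (M, ξ ᵥ* M) hM
  have hphase : -(∑ i, (m i : ℝ) * (Int.cast ∘ ℓ + ξ : Fin 2 → ℝ) i) =
      -(∑ i, (m i : ℝ) * ξ i) + ((-(m ⬝ᵥ ℓ) : ℤ) : ℝ) := by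
    simp only [Pi.add_apply, Function.comp_apply, mul_add, Finset.sum_add_distrib, dotProduct]
    push_cast
    ring
  rw [fhatIntegrand, fhatIntegrand, gmul_transl_mk, gmul_transl_mk, hf_shift, hphase,
    e2πi_add_intCast]

theorem fhatIntegrand_intCast_mul {T : Matrix (Fin 2) (Fin 2) ℤ} (hT : T.det = 1)
    (m : Fin 2 → ℤ) (ξ : Fin 2 → ℝ) :
    fhatIntegrand f (T.map Int.cast * M) m ξ =
      fhatIntegrand f M (m ᵥ* (T⁻¹)ᵀ) (ξ ᵥ* T.map Int.cast) := by
  have hf_left : f (T.map Int.cast * M, ξ ᵥ* (T.map Int.cast * M)) =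
      f (M, ξ ᵥ* T.map Int.cast ᵥ* M) := by
    simpa [gmul, vecMul_vecMul] using
      hf _ (intCast_zero_mem_GammaSet hT) (M, ξ ᵥ* T.map Int.cast ᵥ* M) hM
  rw [fhatIntegrand, fhatIntegrand, gmul_transl_mk, gmul_transl_mk, hf_left]
  congr 3
  exact (intCast_vecMul_inv_transpose_dotProduct_vecMul (hT ▸ isUnit_one) m ξ).symm

theorem fhat_intCast_mul {T : Matrix (Fin 2) (Fin 2) ℤ} (hT : T.det = 1) (m : Fin 2 → ℤ) :
    fhat f (T.map Int.cast * M) m = fhat f M (m ᵥ* (T⁻¹)ᵀ) := by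
  have hTt : IsUnit Tᵀ.det := by rw [det_transpose, hT]; exact isUnit_one
  calc fhat f (T.map Int.cast * M) m
      = ∫ ξ in univ.pi fun _ => Icc (0 : ℝ) 1,
          fhatIntegrand f M (m ᵥ* (T⁻¹)ᵀ) (Tᵀ.map Int.cast *ᵥ ξ) := by
        refine setIntegral_congr_fun (MeasurableSet.univ_pi fun _ => measurableSet_Icc)
          fun ξ _ => ?_
        rw [transpose_map, mulVec_transpose]
        exact fhatIntegrand_intCast_mul hf hM hT m ξ
    _ = fhat f M (m ᵥ* (T⁻¹)ᵀ) :=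
        setIntegral_unitCube_comp_intCast_mulVec hTt (fhatIntegrand_intCast_add hf hM _)

end Invariant

theorem fourier_coefficient_invariance_general
    (f : GG → ℂ)
    (hfinv : ∀ γ ∈ GammaSet, ∀ g ∈ GSet, f (gmul γ g) = f g) :
    (∀ T : Matrix (Fin 2) (Fin 2) ℤ, T.det = 1 →
      ∀ M : Matrix (Fin 2) (Fin 2) ℝ, M.det = 1 → ∀ m : Fin 2 → ℤ,
        fhat f (T.map ((↑) : ℤ → ℝ) * M) m = fhat f M (Matrix.vecMul m (T⁻¹)ᵀ)) ∧
    (∀ n x : ℤ, ∀ M : Matrix (Fin 2) (Fin 2) ℝ, M.det = 1 →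
        ftilde f n (!![1, (x : ℝ); 0, 1] * M) = ftilde f n M) ∧
    (∀ T : Matrix (Fin 2) (Fin 2) ℤ, T.det = 1 →
      ∀ M : Matrix (Fin 2) (Fin 2) ℝ, M.det = 1 →
        ftilde f 0 (T.map ((↑) : ℤ → ℝ) * M) = ftilde f 0 M) := by
  refine ⟨fun T hT M hM m => fhat_intCast_mul hfinv hM hT m, fun n x M hM => ?_,
    fun T hT M hM => ?_⟩
  · have hU : (!![1, x; 0, 1] : Matrix (Fin 2) (Fin 2) ℤ).det = 1 := by simp [det_fin_two_of]
    have hmap : (!![1, x; 0, 1] : Matrix (Fin 2) (Fin 2) ℤ).map Int.cast =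
        !![1, (x : ℝ); 0, 1] := by
      ext i j
      fin_cases i <;> fin_cases j <;> simp
    have hfix : ![n, 0] ᵥ* ((!![1, x; 0, 1] : Matrix (Fin 2) (Fin 2) ℤ)⁻¹)ᵀ = ![n, 0] := by
      ext i
      fin_cases i <;> simp [inv_def, adjugate_fin_two, hU, vecMul, dotProduct]
    rw [ftilde, ftilde, ← hmap, fhat_intCast_mul hfinv hM hU, hfix]
  · have h := fhat_intCast_mul hfinv hM hT ![0, 0]
    rwa [show (![0, 0] : Fin 2 → ℤ) = 0 by ext i; fin_cases i <;> rfl, zero_vecMul] at h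

/-- **Lemma 4.1 (invariance of Fourier coefficients).** For continuous
`Γ`-left-invariant `f : G → ℂ` one has `f̂(TM,m) = f̂(M, m ᵗT⁻¹)` for all
`T ∈ SL(2,ℤ)`, `M ∈ SL(2,ℝ)`, `m ∈ ℤ²`; in particular each `f̃_n` is left
`Γ'_∞`-invariant, and `f̃₀` is left `SL(2,ℤ)`-invariant. -/
theorem fourier_coefficient_invariance
    (f : GG → ℂ) (hfc : ContinuousOn f GSet)
    (hfinv : ∀ γ ∈ GammaSet, ∀ g ∈ GSet, f (gmul γ g) = f g) :
    (∀ T : Matrix (Fin 2) (Fin 2) ℤ, T.det = 1 →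
      ∀ M : Matrix (Fin 2) (Fin 2) ℝ, M.det = 1 → ∀ m : Fin 2 → ℤ,
        fhat f (T.map ((↑) : ℤ → ℝ) * M) m = fhat f M (Matrix.vecMul m (T⁻¹)ᵀ)) ∧
    (∀ n x : ℤ, ∀ M : Matrix (Fin 2) (Fin 2) ℝ, M.det = 1 →
        ftilde f n (!![1, (x : ℝ); 0, 1] * M) = ftilde f n M) ∧
    (∀ T : Matrix (Fin 2) (Fin 2) ℤ, T.det = 1 →
      ∀ M : Matrix (Fin 2) (Fin 2) ℝ, M.det = 1 →
        ftilde f 0 (T.map ((↑) : ℤ → ℝ) * M) = ftilde f 0 M) :=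
  fourier_coefficient_invariance_general f hfinv
end

section
/- Let a,b,c,d ∈ ℝ with ad − bc = 1 and c > 0, let y > 0, let F : SL(2,ℝ) → ℂ be continuous and bounded, and let ν : ℝ → ℂ be continuous with compact support. Then ∫_ℝ F( [[a,b],[c,d]] · [[√y, x/√y],[0, 1/√y]] ) ν(x) dx = ∫₀^π F( [[1,u(θ)],[0,1]] · [[√(v(θ)),0],[0,1/√(v(θ))]] · [[cos θ, −sin θ],[sin θ, cos θ]] ) · ν(−d/c + y·cot θ) · (y/sin²θ) dθ, where u(θ) := a/c − sin(2θ)/(2c²y) and v(θ) := sin²θ/(c²y). -/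
open MeasureTheory Real Matrix Set

/-!
The substitution `x = -d/c + y cot θ` maps `(0, π)` diffeomorphically onto `ℝ` with
`|dx/dθ| = y / sin² θ`, and for this `x` the Iwasawa decomposition `n(u) a(v) k(θ)` of
`[[a,b],[c,d]] · [[√y, x/√y],[0, 1/√y]]` is exactly the one in the statement: its rotation angle
`θ` is read off the bottom row `(c√y, (cx + d)/√y) ∝ (sin θ, cos θ)`.
-/

section CotSubstitution

variable (x₀ : ℝ) {y : ℝ}

lemma hasDerivAt_add_mul_cos_div_sin {θ : ℝ} (hθ : sin θ ≠ 0) :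
    HasDerivAt (fun θ => x₀ + y * (cos θ / sin θ)) (-(y / sin θ ^ 2)) θ := by
  refine (((hasDerivAt_cos θ).div (hasDerivAt_sin θ) hθ).const_mul y).const_add x₀
    |>.congr_deriv ?_
  field_simp
  linear_combination (-y) * sin_sq_add_cos_sq θ

lemma strictAntiOn_add_mul_cos_div_sin (hy : 0 < y) :
    StrictAntiOn (fun θ => x₀ + y * (cos θ / sin θ)) (Ioo 0 π) := by
  have hderiv : ∀ θ ∈ Ioo 0 π,
      HasDerivAt (fun θ => x₀ + y * (cos θ / sin θ)) (-(y / sin θ ^ 2)) θ :=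
    fun θ hθ => hasDerivAt_add_mul_cos_div_sin x₀ (sin_pos_of_mem_Ioo hθ).ne'
  refine strictAntiOn_of_hasDerivWithinAt_neg (convex_Ioo 0 π)
    (fun θ hθ => (hderiv θ hθ).continuousAt.continuousWithinAt)
    (f' := fun θ => -(y / sin θ ^ 2)) (fun θ hθ => ?_) (fun θ hθ => ?_) <;>
    rw [interior_Ioo] at hθ
  · exact (hderiv θ hθ).hasDerivWithinAt
  · have := sin_pos_of_mem_Ioo hθ
    exact neg_lt_zero.2 (by positivity)

lemma image_add_mul_cos_div_sin_Ioo (hy : 0 < y) :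
    (fun θ => x₀ + y * (cos θ / sin θ)) '' Ioo 0 π = univ := by
  -- `cot (π/2 - arctan t) = t`
  refine eq_univ_of_forall fun x => ⟨π / 2 - arctan ((x - x₀) / y), ?_, ?_⟩
  · constructor <;> linarith [arctan_lt_pi_div_two ((x - x₀) / y),
      neg_pi_div_two_lt_arctan ((x - x₀) / y)]
  · have : sqrt (1 + ((x - x₀) / y) ^ 2) ≠ 0 := by positivity
    simp only [cos_pi_div_two_sub, sin_pi_div_two_sub, sin_arctan, cos_arctan]
    field_simp
    ring

theorem integral_eq_intervalIntegral_add_mul_cos_div_sin {E : Type*} [NormedAddCommGroup E]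
    [NormedSpace ℝ E] (g : ℝ → E) (hy : 0 < y) :
    ∫ x, g x = ∫ θ in 0..π, (y / sin θ ^ 2) • g (x₀ + y * (cos θ / sin θ)) := by
  rw [← setIntegral_univ, ← image_add_mul_cos_div_sin_Ioo x₀ hy,
    integral_image_eq_integral_abs_deriv_smul measurableSet_Ioo
      (fun θ hθ => (hasDerivAt_add_mul_cos_div_sin x₀ (sin_pos_of_mem_Ioo hθ).ne').hasDerivWithinAt)
      (strictAntiOn_add_mul_cos_div_sin x₀ hy).injOn g,
    intervalIntegral.integral_of_le pi_pos.le, integral_Ioc_eq_integral_Ioo]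
  refine setIntegral_congr_fun measurableSet_Ioo fun θ hθ => ?_
  have := sin_pos_of_mem_Ioo hθ
  rw [abs_neg, abs_of_pos (by positivity)]

end CotSubstitution

lemma iwasawa_decomposition_of_cot (a b c d : ℝ) (hdet : a * d - b * c = 1) (hc : 0 < c)
    {y : ℝ} (hy : 0 < y) {θ : ℝ} (hθ : θ ∈ Ioo 0 π) :
    !![a, b; c, d] *
        !![sqrt y, (-(d / c) + y * (cos θ / sin θ)) / sqrt y; 0, (sqrt y)⁻¹] =
      !![1, a / c - sin (2 * θ) / (2 * c ^ 2 * y); 0, 1] *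
        !![sqrt (sin θ ^ 2 / (c ^ 2 * y)), 0; 0, (sqrt (sin θ ^ 2 / (c ^ 2 * y)))⁻¹] *
        !![cos θ, -sin θ; sin θ, cos θ] := by
  have hs : 0 < sin θ := sin_pos_of_mem_Ioo hθ
  obtain ⟨w, hw, rfl⟩ : ∃ w : ℝ, 0 < w ∧ y = w ^ 2 :=
    ⟨sqrt y, sqrt_pos.2 hy, (sq_sqrt hy.le).symm⟩
  have hv : sqrt (sin θ ^ 2 / (c ^ 2 * w ^ 2)) = sin θ / (c * w) := by
    rw [show sin θ ^ 2 / (c ^ 2 * w ^ 2) = (sin θ / (c * w)) ^ 2 by ring]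
    exact sqrt_sq (by positivity)
  rw [hv, sqrt_sq hw.le, sin_two_mul, mul_fin_two, mul_fin_two, mul_fin_two]
  simp only [EmbeddingLike.apply_eq_iff_eq, vecCons_inj, and_true, mul_zero, zero_mul, add_zero,
    zero_add, one_mul]
  refine ⟨⟨?_, ?_⟩, ?_, ?_⟩
  · field_simp
    ring
  · field_simp
    linear_combination (-sin θ) * hdet + sin θ * sin_sq_add_cos_sq θ
  · field_simp
  · field_simp
    ring

theorem iwasawa_coordinates_integral_general
    (a b c d : ℝ) (hdet : a * d - b * c = 1) (hc : 0 < c) (y : ℝ) (hy : 0 < y)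
    (F : Matrix (Fin 2) (Fin 2) ℝ → ℂ)
    (ν : ℝ → ℂ) :
    (∫ x : ℝ, F (!![a, b; c, d] * !![Real.sqrt y, x / Real.sqrt y; 0, (Real.sqrt y)⁻¹]) * ν x) =
      ∫ θ in (0:ℝ)..Real.pi,
        F (!![1, a / c - Real.sin (2 * θ) / (2 * c ^ 2 * y); 0, 1] *
            !![Real.sqrt (Real.sin θ ^ 2 / (c ^ 2 * y)), 0; 0,
               (Real.sqrt (Real.sin θ ^ 2 / (c ^ 2 * y)))⁻¹] *
            !![Real.cos θ, -Real.sin θ; Real.sin θ, Real.cos θ]) *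
          ν (-(d / c) + y * (Real.cos θ / Real.sin θ)) *
          ((y / Real.sin θ ^ 2 : ℝ) : ℂ) := by
  rw [integral_eq_intervalIntegral_add_mul_cos_div_sin (-(d / c)) _ hy]
  refine intervalIntegral.integral_congr_ae ?_
  filter_upwards [Measure.ae_ne volume π] with θ hθπ hθ
  rw [uIoc_of_le pi_pos.le] at hθ
  rw [iwasawa_decomposition_of_cot a b c d hdet hc hy ⟨hθ.1, hθ.2.lt_of_ne hθπ⟩,
    Complex.real_smul]
  ring

/-- **Lemma 6.1 (Iwasawa coordinates).** For `[[a,b],[c,d]] ∈ SL(2,ℝ)` with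
`c > 0`, `y > 0`, `F : SL(2,ℝ) → ℂ` continuous and bounded and `ν : ℝ → ℂ`
continuous with compact support,
`∫_ℝ F([[a,b],[c,d]]·[[√y, x/√y],[0,1/√y]]) ν(x) dx
  = ∫₀^π F(n(u(θ)) a(v(θ)) k(θ)) ν(-d/c + y cot θ) (y/sin²θ) dθ`,
where `u(θ) = a/c - sin(2θ)/(2c²y)` and `v(θ) = sin²θ/(c²y)`. -/
theorem iwasawa_coordinates_integral
    (a b c d : ℝ) (hdet : a * d - b * c = 1) (hc : 0 < c) (y : ℝ) (hy : 0 < y)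
    (F : Matrix (Fin 2) (Fin 2) ℝ → ℂ)
    (hFc : ContinuousOn F {M : Matrix (Fin 2) (Fin 2) ℝ | M.det = 1})
    (hFb : ∃ B : ℝ, ∀ M : Matrix (Fin 2) (Fin 2) ℝ, M.det = 1 → ‖F M‖ ≤ B)
    (ν : ℝ → ℂ) (hν : Continuous ν) (hνs : HasCompactSupport ν) :
    (∫ x : ℝ, F (!![a, b; c, d] * !![Real.sqrt y, x / Real.sqrt y; 0, (Real.sqrt y)⁻¹]) * ν x) =
      ∫ θ in (0:ℝ)..Real.pi,
        F (!![1, a / c - Real.sin (2 * θ) / (2 * c ^ 2 * y); 0, 1] *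
            !![Real.sqrt (Real.sin θ ^ 2 / (c ^ 2 * y)), 0; 0,
               (Real.sqrt (Real.sin θ ^ 2 / (c ^ 2 * y)))⁻¹] *
            !![Real.cos θ, -Real.sin θ; Real.sin θ, Real.cos θ]) *
          ν (-(d / c) + y * (Real.cos θ / Real.sin θ)) *
          ((y / Real.sin θ ^ 2 : ℝ) : ℂ) :=
  iwasawa_coordinates_integral_general a b c d hdet hc y hy F ν
end

section
/- For every m ∈ ℤ⁺ there exists a constant C_m > 0 such that for all X > 0: if X ≥ 1 then ∑_{c=1}^∞ (X+c)^{−m} σ(c)/√c ≤ C_m · X^{1/2−m} · log(1+X), and if 0 < X < 1 then ∑_{c=1}^∞ (X+c)^{−m} σ(c)/√c ≤ C_m. -/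
/-!
Since `σ(c)` counts the factorizations `c = a b`, the sum is a double sum over `a, b ≥ 1`.
Bounding `(X + a b)^{-(m-1)}` by `X^{1-m}` (by `1` when `X < 1`) leaves
`∑_{a,b} ((X + a b) √(a b))⁻¹`. For fixed `a ≤ X`, split the sum over `b` at `b = X / a`: below it
`X + a b ≥ X` and `∑ b^{-1/2} ≪ √(X / a)`, above it `X + a b ≥ a b` and `∑ b^{-3/2} ≪ √(a / X)`;
either way the contribution is `≪ 1 / (a √X)`, which sums over `a ≤ X` to `≪ log X / √X`.
For `a > X` the bound `X + a b ≥ a b` gives `≪ a^{-3/2}`, whose tail is `≪ 1 / √X`.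
-/

open Real Finset

lemma sum_Ioc_le_sub_of_le_sub {f g : ℕ → ℝ} {K : ℕ}
    (h : ∀ n, K ≤ n → f (n + 1) ≤ g n - g (n + 1)) {N : ℕ} (hKN : K ≤ N) :
    ∑ n ∈ Ioc K N, f n ≤ g K - g N := by
  induction N, hKN using Nat.le_induction with
  | base => simp
  | succ N hKN ih =>
    rw [sum_Ioc_succ_top hKN]
    linarith [h N hKN]

lemma sum_Icc_inv_sqrt_le (N : ℕ) : ∑ b ∈ Icc 1 N, (√b)⁻¹ ≤ 2 * √N := by
  rw [show Icc 1 N = Ioc 0 N from Icc_add_one_left_eq_Ioc 0 N]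
  have key := sum_Ioc_le_sub_of_le_sub (f := fun b : ℕ => (√b)⁻¹) (g := fun n => -(2 * √n))
    (K := 0) ?_ (Nat.zero_le N)
  · simpa using key
  intro n _
  have hs : √(n : ℝ) ≤ √((n + 1 : ℕ) : ℝ) := sqrt_le_sqrt (by push_cast; linarith)
  have ht : 0 < √((n + 1 : ℕ) : ℝ) := sqrt_pos.2 (by positivity)
  have hst : √((n + 1 : ℕ) : ℝ) ^ 2 - √(n : ℝ) ^ 2 = 1 := by
    rw [sq_sqrt (by positivity), sq_sqrt (by positivity)]; push_cast; ring
  -- with `s = √n ≤ t = √(n+1)`: `2 t (t - s) ≥ (t + s) (t - s) = 1`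
  rw [inv_le_iff_one_le_mul₀ ht]
  nlinarith

lemma sum_Ioc_inv_mul_sqrt_le {K : ℕ} (hK : 1 ≤ K) (N : ℕ) :
    ∑ b ∈ Ioc K N, ((b : ℝ) * √b)⁻¹ ≤ 2 / √K := by
  rcases le_or_gt K N with hKN | hNK
  · have key := sum_Ioc_le_sub_of_le_sub (f := fun b : ℕ => ((b : ℝ) * √b)⁻¹)
      (g := fun n => 2 / √n) (K := K) ?_ hKN
    · have : 0 ≤ 2 / √(N : ℝ) := by positivity
      linarith
    intro n hn
    have hn0 : (0 : ℝ) < n := by exact_mod_cast hK.trans hn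
    have hs0 : 0 < √(n : ℝ) := sqrt_pos.2 hn0
    have hs : √(n : ℝ) ≤ √((n + 1 : ℕ) : ℝ) := sqrt_le_sqrt (by push_cast; linarith)
    have hst : √((n + 1 : ℕ) : ℝ) ^ 2 - √(n : ℝ) ^ 2 = 1 := by
      rw [sq_sqrt (by positivity), sq_sqrt (by positivity)]; push_cast; ring
    have hn1 : ((n + 1 : ℕ) : ℝ) = √((n + 1 : ℕ) : ℝ) ^ 2 := (sq_sqrt (by positivity)).symm
    generalize √(n : ℝ) = s at *
    generalize √((n + 1 : ℕ) : ℝ) = t at *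
    rw [hn1]
    have ht : 0 < t := hs0.trans_le hs
    -- `t - s = 1 / (t + s) ≥ 1 / (2 t)`, so `2 / s - 2 / t ≥ 1 / (s t²) ≥ 1 / t³`
    rw [div_sub_div _ _ hs0.ne' ht.ne', inv_le_iff_one_le_mul₀ (by positivity),
      div_mul_eq_mul_div, le_div_iff₀ (by positivity)]
    nlinarith [mul_pos hs0 ht, mul_nonneg ht.le (sub_nonneg.2 hs)]
  · rw [Ioc_eq_empty_of_le hNK.le, sum_empty]
    positivity

lemma sum_Icc_le_sum_Icc_add_sum_Ioc {f : ℕ → ℝ} (hf : ∀ n, 0 ≤ f n) (K N : ℕ) :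
    ∑ n ∈ Icc 1 N, f n ≤ ∑ n ∈ Icc 1 K, f n + ∑ n ∈ Ioc K N, f n := by
  rw [← sum_union (disjoint_left.2 fun n h₁ h₂ => by simp at h₁ h₂; omega)]
  refine sum_le_sum_of_subset_of_nonneg (fun n hn => ?_) fun n _ _ => hf n
  simp only [mem_union, mem_Icc, mem_Ioc] at hn ⊢
  omega

lemma sum_Icc_inv_mul_sqrt_le (N : ℕ) : ∑ b ∈ Icc 1 N, ((b : ℝ) * √b)⁻¹ ≤ 3 := by
  have := sum_Icc_le_sum_Icc_add_sum_Ioc (f := fun b : ℕ => ((b : ℝ) * √b)⁻¹)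
    (fun b => by positivity) 1 N
  have := sum_Ioc_inv_mul_sqrt_le le_rfl N
  norm_num at *
  linarith

lemma sum_Ioc_floor_inv_mul_sqrt_le {y : ℝ} (hy : 1 ≤ y) (N : ℕ) :
    ∑ b ∈ Ioc ⌊y⌋₊ N, ((b : ℝ) * √b)⁻¹ ≤ 3 / √y := by
  have hK : 1 ≤ ⌊y⌋₊ := (Nat.one_le_floor_iff y).2 hy
  have hK' : (1 : ℝ) ≤ ⌊y⌋₊ := by exact_mod_cast hK
  refine (sum_Ioc_inv_mul_sqrt_le hK N).trans ?_
  -- `4 y ≤ 9 ⌊y⌋₊`, hence `2 √y ≤ 3 √⌊y⌋₊`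
  have hy2 : y ≤ 2 * ⌊y⌋₊ := by linarith [Nat.lt_floor_add_one y]
  rw [div_le_div_iff₀ (by positivity) (by positivity)]
  nlinarith [sq_sqrt (zero_le_one.trans hy), sq_sqrt (zero_le_one.trans hK'),
    sqrt_nonneg y, sqrt_nonneg (⌊y⌋₊ : ℝ)]

lemma sum_Icc_floor_inv_le_one_add_log {y : ℝ} (hy : 1 ≤ y) :
    ∑ a ∈ Icc 1 ⌊y⌋₊, (a : ℝ)⁻¹ ≤ 1 + log y := by
  have h := harmonic_le_one_add_log ⌊y⌋₊
  rw [harmonic_eq_sum_Icc] at h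
  push_cast at h
  have : log ⌊y⌋₊ ≤ log y :=
    log_le_log (by exact_mod_cast (Nat.one_le_floor_iff y).2 hy) (Nat.floor_le (by linarith))
  linarith

lemma inv_add_mul_mul_sqrt_le {X a b : ℝ} (hX : 0 ≤ X) (ha : 0 < a) (hb : 0 < b) :
    ((X + a * b) * (√a * √b))⁻¹ ≤ (a * √a)⁻¹ * (b * √b)⁻¹ := by
  rw [← mul_inv]
  have : 0 < √a * √b := by positivity
  exact inv_anti₀ (by positivity) (by nlinarith)

lemma sum_inv_add_mul_mul_sqrt_le {X : ℝ} (hX : 0 ≤ X) {a : ℕ} (ha : 1 ≤ a) (N : ℕ) :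
    ∑ b ∈ Icc 1 N, ((X + a * b) * (√a * √b))⁻¹ ≤ 3 * ((a : ℝ) * √a)⁻¹ := by
  have ha0 : (0 : ℝ) < a := by exact_mod_cast ha
  calc ∑ b ∈ Icc 1 N, ((X + a * b) * (√a * √b))⁻¹
      ≤ ∑ b ∈ Icc 1 N, ((a : ℝ) * √a)⁻¹ * ((b : ℝ) * √b)⁻¹ :=
        sum_le_sum fun b hb => inv_add_mul_mul_sqrt_le hX ha0
          (by exact_mod_cast (mem_Icc.1 hb).1)
    _ ≤ ((a : ℝ) * √a)⁻¹ * 3 := by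
        rw [← mul_sum]
        gcongr
        exact sum_Icc_inv_mul_sqrt_le N
    _ = 3 * ((a : ℝ) * √a)⁻¹ := mul_comm _ _

lemma sum_inv_add_mul_mul_sqrt_le_of_le {X : ℝ} {a : ℕ} (ha : 1 ≤ a) (haX : (a : ℝ) ≤ X)
    (N : ℕ) : ∑ b ∈ Icc 1 N, ((X + a * b) * (√a * √b))⁻¹ ≤ 5 / (a * √X) := by
  have ha0 : (0 : ℝ) < a := by exact_mod_cast ha
  have hX : 0 < X := ha0.trans_le haX
  have hy : 1 ≤ X / a := (one_le_div ha0).2 haX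
  have low : ∑ b ∈ Icc 1 ⌊X / a⌋₊, ((X + a * b) * (√a * √b))⁻¹ ≤ 2 / (a * √X) :=
    calc ∑ b ∈ Icc 1 ⌊X / a⌋₊, ((X + a * b) * (√a * √b))⁻¹
        ≤ ∑ b ∈ Icc 1 ⌊X / a⌋₊, (X * √a)⁻¹ * (√b)⁻¹ := by
          refine sum_le_sum fun b hb => ?_
          have hb0 : (0 : ℝ) < b := by exact_mod_cast (mem_Icc.1 hb).1
          rw [← mul_inv, ← mul_assoc]
          exact inv_anti₀ (by positivity) (by gcongr; linarith [mul_pos ha0 hb0])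
      _ ≤ (X * √a)⁻¹ * (2 * √(X / a)) := by
          rw [← mul_sum]
          gcongr
          exact (sum_Icc_inv_sqrt_le _).trans (by gcongr; exact Nat.floor_le (by positivity))
      _ = 2 / (a * √X) := by
          rw [sqrt_div' _ ha0.le]
          field_simp
          rw [sq_sqrt hX.le, sq_sqrt ha0.le]
  have high : ∑ b ∈ Ioc ⌊X / a⌋₊ N, ((X + a * b) * (√a * √b))⁻¹ ≤ 3 / (a * √X) :=
    calc ∑ b ∈ Ioc ⌊X / a⌋₊ N, ((X + a * b) * (√a * √b))⁻¹
        ≤ ∑ b ∈ Ioc ⌊X / a⌋₊ N, ((a : ℝ) * √a)⁻¹ * ((b : ℝ) * √b)⁻¹ :=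
          sum_le_sum fun b hb => inv_add_mul_mul_sqrt_le hX.le ha0
            (by exact_mod_cast (Nat.zero_le _).trans_lt (mem_Ioc.1 hb).1)
      _ ≤ ((a : ℝ) * √a)⁻¹ * (3 / √(X / a)) := by
          rw [← mul_sum]
          gcongr
          exact sum_Ioc_floor_inv_mul_sqrt_le hy N
      _ = 3 / (a * √X) := by
          rw [sqrt_div' _ ha0.le]
          field_simp
  calc ∑ b ∈ Icc 1 N, ((X + a * b) * (√a * √b))⁻¹
      ≤ ∑ b ∈ Icc 1 ⌊X / a⌋₊, ((X + a * b) * (√a * √b))⁻¹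
        + ∑ b ∈ Ioc ⌊X / a⌋₊ N, ((X + a * b) * (√a * √b))⁻¹ :=
        sum_Icc_le_sum_Icc_add_sum_Ioc (fun b => by positivity) _ _
    _ ≤ 2 / (a * √X) + 3 / (a * √X) := add_le_add low high
    _ = 5 / (a * √X) := by ring

lemma sum_sum_inv_add_mul_mul_sqrt_le_nine {X : ℝ} (hX : 0 ≤ X) (N : ℕ) :
    ∑ a ∈ Icc 1 N, ∑ b ∈ Icc 1 N, ((X + a * b) * (√a * √b))⁻¹ ≤ 9 :=
  calc ∑ a ∈ Icc 1 N, ∑ b ∈ Icc 1 N, ((X + a * b) * (√a * √b))⁻¹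
      ≤ ∑ a ∈ Icc 1 N, 3 * ((a : ℝ) * √a)⁻¹ :=
        sum_le_sum fun a ha => sum_inv_add_mul_mul_sqrt_le hX (mem_Icc.1 ha).1 N
    _ ≤ 3 * 3 := by
        rw [← mul_sum]
        gcongr
        exact sum_Icc_inv_mul_sqrt_le N
    _ = 9 := by norm_num

lemma sum_sum_inv_add_mul_mul_sqrt_le {X : ℝ} (hX : 1 ≤ X) (N : ℕ) :
    ∑ a ∈ Icc 1 N, ∑ b ∈ Icc 1 N, ((X + a * b) * (√a * √b))⁻¹ ≤ 33 * log (1 + X) / √X := by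
  have hsX : 0 < √X := sqrt_pos.2 (by linarith)
  have low : ∑ a ∈ Icc 1 ⌊X⌋₊, ∑ b ∈ Icc 1 N, ((X + a * b) * (√a * √b))⁻¹
      ≤ 5 / √X * (1 + log X) :=
    calc ∑ a ∈ Icc 1 ⌊X⌋₊, ∑ b ∈ Icc 1 N, ((X + a * b) * (√a * √b))⁻¹
        ≤ ∑ a ∈ Icc 1 ⌊X⌋₊, 5 / √X * (a : ℝ)⁻¹ := by
          refine sum_le_sum fun a ha => ?_
          have haX : (a : ℝ) ≤ X := (Nat.le_floor_iff (by linarith)).1 (mem_Icc.1 ha).2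
          refine (sum_inv_add_mul_mul_sqrt_le_of_le (mem_Icc.1 ha).1 haX N).trans_eq ?_
          rw [mul_comm (a : ℝ), div_mul_eq_div_mul_one_div, one_div]
      _ ≤ 5 / √X * (1 + log X) := by
          rw [← mul_sum]
          gcongr
          exact sum_Icc_floor_inv_le_one_add_log hX
  have high : ∑ a ∈ Ioc ⌊X⌋₊ N, ∑ b ∈ Icc 1 N, ((X + a * b) * (√a * √b))⁻¹ ≤ 3 * (3 / √X) :=
    calc ∑ a ∈ Ioc ⌊X⌋₊ N, ∑ b ∈ Icc 1 N, ((X + a * b) * (√a * √b))⁻¹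
        ≤ ∑ a ∈ Ioc ⌊X⌋₊ N, 3 * ((a : ℝ) * √a)⁻¹ :=
          sum_le_sum fun a ha => sum_inv_add_mul_mul_sqrt_le (by linarith)
            ((Nat.zero_le _).trans_lt (mem_Ioc.1 ha).1) N
      _ ≤ 3 * (3 / √X) := by
          rw [← mul_sum]
          gcongr
          exact sum_Ioc_floor_inv_mul_sqrt_le hX N
  have hlog : log X ≤ log (1 + X) := log_le_log (by linarith) (by linarith)
  have hlog2 : 1 / 2 ≤ log (1 + X) :=
    (by linarith [log_two_gt_d9] : (1 : ℝ) / 2 ≤ log 2).trans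
      (log_le_log (by norm_num) (by linarith))
  calc ∑ a ∈ Icc 1 N, ∑ b ∈ Icc 1 N, ((X + a * b) * (√a * √b))⁻¹
      ≤ ∑ a ∈ Icc 1 ⌊X⌋₊, ∑ b ∈ Icc 1 N, ((X + a * b) * (√a * √b))⁻¹
        + ∑ a ∈ Ioc ⌊X⌋₊ N, ∑ b ∈ Icc 1 N, ((X + a * b) * (√a * √b))⁻¹ :=
        sum_Icc_le_sum_Icc_add_sum_Ioc (fun a => sum_nonneg fun b _ => by positivity) _ _
    _ ≤ 5 / √X * (1 + log X) + 3 * (3 / √X) := add_le_add low high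
    _ = (14 + 5 * log X) / √X := by ring
    _ ≤ 33 * log (1 + X) / √X := by gcongr; linarith

lemma sum_card_divisors_mul_le_sum_sum {F : Finset ℕ+} {N : ℕ} (hN : ∀ c ∈ F, (c : ℕ) ≤ N)
    {w : ℕ → ℝ} (hw : ∀ n, 0 ≤ w n) :
    ∑ c ∈ F, ((c : ℕ).divisors.card : ℝ) * w c ≤ ∑ a ∈ Icc 1 N, ∑ b ∈ Icc 1 N, w (a * b) := by
  have hc : ∀ c ∈ F, ((c : ℕ).divisors.card : ℝ) * w c
      = ∑ p ∈ (c : ℕ).divisorsAntidiagonal, w (p.1 * p.2) := fun c _ => by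
    rw [sum_congr rfl fun p hp => congrArg w (Nat.mem_divisorsAntidiagonal.1 hp).1, sum_const,
      ← Nat.map_div_right_divisors, card_map, nsmul_eq_mul]
  have hdisj : (F : Set ℕ+).PairwiseDisjoint fun c => (c : ℕ).divisorsAntidiagonal :=
    fun c _ c' _ hne => disjoint_left.2 fun p hp hp' => hne <| PNat.coe_injective <|
      (Nat.mem_divisorsAntidiagonal.1 hp).1.symm.trans (Nat.mem_divisorsAntidiagonal.1 hp').1
  rw [sum_congr rfl hc, ← sum_biUnion hdisj, ← sum_product']
  refine sum_le_sum_of_subset_of_nonneg (fun p hp => ?_) fun p _ _ => hw _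
  obtain ⟨c, hcF, hp⟩ := mem_biUnion.1 hp
  have hc0 : (c : ℕ) ≠ 0 := c.ne_zero
  have h₁ := Nat.divisor_le (Nat.fst_mem_divisors_of_mem_antidiagonal hp)
  have h₂ := Nat.divisor_le (Nat.snd_mem_divisors_of_mem_antidiagonal hp)
  have h₃ := (Nat.mem_divisorsAntidiagonal.1 hp).1
  have h₄ := hN c hcF
  simp only [mem_product, mem_Icc]
  refine ⟨⟨Nat.pos_of_ne_zero ?_, by omega⟩, ⟨Nat.pos_of_ne_zero ?_, by omega⟩⟩ <;>
    rintro h <;> simp [h] at h₃ <;> omega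

lemma inv_pow_le_inv_pow_pred_mul_inv {x y : ℝ} (hx : 0 < x) (hxy : x ≤ y) {m : ℕ} (hm : 0 < m) :
    (y ^ m)⁻¹ ≤ (x ^ (m - 1))⁻¹ * y⁻¹ := by
  have hy : 0 < y := hx.trans_le hxy
  rw [← mul_inv, ← pow_sub_one_mul hm.ne' y]
  exact inv_anti₀ (by positivity) (by gcongr)

lemma tsum_inv_add_pow_mul_card_divisors_div_sqrt_le {X x B : ℝ} {m : ℕ} (hm : 0 < m)
    (hX : 0 ≤ X) (hx : 0 < x) (hxX : x ≤ X + 1)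
    (hB : ∀ N : ℕ, ∑ a ∈ Icc 1 N, ∑ b ∈ Icc 1 N, ((X + a * b) * (√a * √b))⁻¹ ≤ B) :
    ∑' c : ℕ+, ((X + ((c : ℕ) : ℝ)) ^ m)⁻¹ * (((c : ℕ).divisors.card : ℝ) / √((c : ℕ) : ℝ))
      ≤ (x ^ (m - 1))⁻¹ * B := by
  have hB0 : 0 ≤ B := by simpa using hB 0
  refine tsum_le_of_sum_le' (by positivity) fun F => ?_
  calc ∑ c ∈ F, ((X + ((c : ℕ) : ℝ)) ^ m)⁻¹ * (((c : ℕ).divisors.card : ℝ) / √((c : ℕ) : ℝ))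
      ≤ ∑ c ∈ F, (x ^ (m - 1))⁻¹ *
          (((c : ℕ).divisors.card : ℝ) * ((X + ((c : ℕ) : ℝ)) * √((c : ℕ) : ℝ))⁻¹) := by
        refine sum_le_sum fun c _ => ?_
        have hxc : x ≤ X + ((c : ℕ) : ℝ) := hxX.trans (by gcongr; exact Nat.one_le_cast.2 c.pos)
        calc _ ≤ (x ^ (m - 1))⁻¹ * (X + ((c : ℕ) : ℝ))⁻¹ *
              (((c : ℕ).divisors.card : ℝ) / √((c : ℕ) : ℝ)) := by
              gcongr
              exact inv_pow_le_inv_pow_pred_mul_inv hx hxc hm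
          _ = _ := by rw [mul_inv]; ring
    _ = (x ^ (m - 1))⁻¹ * ∑ c ∈ F, ((c : ℕ).divisors.card : ℝ) *
          ((X + ((c : ℕ) : ℝ)) * √((c : ℕ) : ℝ))⁻¹ := by rw [mul_sum]
    _ ≤ (x ^ (m - 1))⁻¹ * B := by
        gcongr
        refine (sum_card_divisors_mul_le_sum_sum (N := F.sup (↑)) (fun c hc => le_sup hc)
          (w := fun n : ℕ => ((X + n) * √n)⁻¹) fun n => by positivity).trans
          (Eq.trans_le (sum_congr rfl fun a _ => sum_congr rfl fun b _ => ?_) (hB _))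
        push_cast
        rw [sqrt_mul (Nat.cast_nonneg a)]

lemma rpow_one_half_sub_natCast {X : ℝ} (hX : 0 < X) {m : ℕ} (hm : 0 < m) :
    X ^ ((1 : ℝ) / 2 - m) = (X ^ (m - 1))⁻¹ / √X := by
  rw [rpow_sub hX, rpow_natCast, ← sqrt_eq_rpow, ← pow_sub_one_mul hm.ne' X]
  field_simp
  rw [sq_sqrt hX.le]

/-- **Lemma 7.2.** For every `m ∈ ℤ⁺` there is `C_m > 0` such that
`∑_{c≥1} (X+c)^{-m} σ(c)/√c ≤ C_m X^{1/2-m} log(1+X)` for `X ≥ 1`, and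
`≤ C_m` for `0 < X < 1`. -/
theorem divisor_sum_estimate (m : ℕ) (hm : 0 < m) :
    ∃ C : ℝ, 0 < C ∧ ∀ X : ℝ, 0 < X →
      (1 ≤ X →
        (∑' c : ℕ+, ((X + ((c : ℕ) : ℝ)) ^ m)⁻¹ *
            (((c : ℕ).divisors.card : ℝ) / Real.sqrt ((c : ℕ) : ℝ))) ≤
          C * X ^ ((1:ℝ)/2 - (m : ℝ)) * Real.log (1 + X)) ∧
      (X < 1 →
        (∑' c : ℕ+, ((X + ((c : ℕ) : ℝ)) ^ m)⁻¹ *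
            (((c : ℕ).divisors.card : ℝ) / Real.sqrt ((c : ℕ) : ℝ))) ≤ C) := by
  refine ⟨33, by norm_num, fun X hX => ⟨fun hX1 => ?_, fun _ => ?_⟩⟩
  · calc _ ≤ (X ^ (m - 1))⁻¹ * (33 * log (1 + X) / √X) :=
          tsum_inv_add_pow_mul_card_divisors_div_sqrt_le hm hX.le hX (by linarith)
            (sum_sum_inv_add_mul_mul_sqrt_le hX1)
      _ = 33 * X ^ ((1:ℝ)/2 - (m : ℝ)) * log (1 + X) := by
          rw [rpow_one_half_sub_natCast hX hm]
          ring
  · calc _ ≤ ((1 : ℝ) ^ (m - 1))⁻¹ * 9 :=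
          tsum_inv_add_pow_mul_card_divisors_div_sqrt_le hm hX.le one_pos (by linarith)
            (sum_sum_inv_add_mul_mul_sqrt_le_nine hX.le)
      _ ≤ 33 := by norm_num
end

section
/- Fix η > 0 and an integer m ≥ 3. There exists a constant C > 0 (depending only on η and m) such that for every α ∈ ℝ and every X > 0: if X ≥ 1 then ∑_{c=1}^∞ c⁻¹ (X+c)^{1−m} ∑_{k∈ℤ} gcd(c,k)/(1 + |k − cα|^{1+η}) ≤ C · X^{2−m} · 𝔐_α(X), and if 0 < X < 1 then the same double sum is ≤ C. -/
/-!
Write `p = 1 + η`. Since `gcd(c, k) = ∑_{d ∣ c, d ∣ k} φ(d)`, the inner sum over `k` equals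
`∑_{de = c} φ(d) ∑_{j ∈ ℤ} (1 + (d |j - eα|)^p)⁻¹`. In the sum over `j` the integer nearest to
`eα` contributes at most `(1 + (d⟨eα⟩)^p)⁻¹` and the others `O(d^{-p})`; with `φ(d) ≤ d` the
pair `(d, e)` thus contributes at most `e⁻¹ (X + de)^{1-m} ((1 + (d⟨eα⟩)^p)⁻¹ + O(d^{-p}))`.
For fixed `e` the sum over `d` is bounded in two ways: by `∑_{d ≥ 1} (X + de)^{1-m} ≤
X^{2-m} / ((m - 2) e)`, which telescopes by convexity of `t ↦ t^{2-m}`, and by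
`(X + de)^{1-m} ≤ X^{1-m}` together with `∑_d (1 + (d⟨eα⟩)^p)⁻¹ = O(1/⟨eα⟩)`. Together they give
`X^{2-m}` times the `e`-th term of `𝔐_α(X)`. For `X < 1` the inner sum is `O(c)` and
`∑_c c⁻¹ (X + c)^{1-m} c ≤ ∑_c c^{1-m} < ∞`.
-/

open Real

noncomputable section

/-- The majorant `𝔐_α(X) = ∑_{ℓ≥1} min(1/ℓ², 1/(Xℓ⟨ℓα⟩))`, a term with
`⟨ℓα⟩ = 0` being read as `1/ℓ²`. -/
def frakM (α X : ℝ) : ℝ :=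
  ∑' l : ℕ+, if nint (((l : ℕ) : ℝ) * α) = 0 then 1 / ((l : ℕ) : ℝ) ^ 2
    else min (1 / ((l : ℕ) : ℝ) ^ 2) (1 / (X * ((l : ℕ) : ℝ) * nint (((l : ℕ) : ℝ) * α)))

open Finset

theorem mul_sub_mul_rpow_neg_le_rpow_neg_sub {q A B : ℝ} (hq : 0 ≤ q) (hA : 0 < A) (hAB : A ≤ B) :
    q * (B - A) * B ^ (-(q + 1)) ≤ A ^ (-q) - B ^ (-q) := by
  have hB : 0 < B := hA.trans_le hAB
  have bernoulli : 1 + (q + 1) * (B / A - 1) ≤ (B / A) ^ (q + 1) := by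
    simpa using one_add_mul_self_le_rpow_one_add (s := B / A - 1)
      (by linarith [div_nonneg hB.le hA.le]) (by linarith : 1 ≤ q + 1)
  rw [div_rpow hB.le hA.le, rpow_add_one hA.ne', rpow_add_one hB.ne'] at bernoulli
  rw [rpow_neg hB.le, rpow_neg hA.le, rpow_neg hB.le, rpow_add_one hB.ne']
  have ha : 0 < A ^ q := rpow_pos_of_pos hA q
  have hb : 0 < B ^ q := rpow_pos_of_pos hB q
  have hlin : (1 + (q + 1) * (B / A - 1)) * A = B + q * (B - A) := by field_simp; ring
  rw [le_div_iff₀ (by positivity), mul_comm (A ^ q), ← mul_assoc, hlin] at bernoulli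
  field_simp
  nlinarith

theorem sum_range_rpow_neg_add_mul_le {q Y e : ℝ} (hq : 0 < q) (hY : 0 < Y) (he : 0 < e) (N : ℕ) :
    ∑ d ∈ range N, (Y + (d + 1) * e) ^ (-(q + 1)) ≤ Y ^ (-q) / (q * e) := by
  set g : ℕ → ℝ := fun d => (Y + d * e) ^ (-q)
  calc ∑ d ∈ range N, (Y + (d + 1) * e) ^ (-(q + 1))
      ≤ ∑ d ∈ range N, (g d - g (d + 1)) / (q * e) := by
        gcongr with d
        rw [le_div_iff₀ (by positivity)]
        have := mul_sub_mul_rpow_neg_le_rpow_neg_sub hq.le (A := Y + d * e) (B := Y + (d + 1) * e)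
          (by positivity) (by nlinarith)
        simp only [g, Nat.cast_succ]
        linarith
    _ = (g 0 - g N) / (q * e) := by rw [← sum_div, sum_range_sub']
    _ ≤ Y ^ (-q) / (q * e) := by
        gcongr
        simp only [g, CharP.cast_eq_zero, zero_mul, add_zero, sub_le_self_iff]
        positivity

theorem summable_rpow_neg_add_mul {q Y e : ℝ} (hq : 0 < q) (hY : 0 < Y) (he : 0 < e) :
    Summable fun d : ℕ+ => (Y + (d : ℕ) * e) ^ (-(q + 1)) := by
  rw [summable_pnat_iff_summable_succ (f := fun d : ℕ => (Y + d * e) ^ (-(q + 1)))]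
  refine summable_of_sum_range_le (c := Y ^ (-q) / (q * e)) (fun d => by positivity) fun N => ?_
  simpa using sum_range_rpow_neg_add_mul_le hq hY he N

theorem tsum_rpow_neg_add_mul_le {q Y e : ℝ} (hq : 0 < q) (hY : 0 < Y) (he : 0 < e) :
    ∑' d : ℕ+, (Y + (d : ℕ) * e) ^ (-(q + 1)) ≤ Y ^ (-q) / (q * e) := by
  rw [tsum_pnat_eq_tsum_succ (f := fun d : ℕ => (Y + d * e) ^ (-(q + 1)))]
  refine Real.tsum_le_of_sum_range_le (fun d => by positivity) fun N => ?_
  simpa using sum_range_rpow_neg_add_mul_le hq hY he N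

theorem one_div_one_add_rpow_le {p t : ℝ} (hp : 0 ≤ p) (ht : 0 ≤ t) :
    1 / (1 + t ^ p) ≤ 2 ^ p * (1 + t) ^ (-p) := by
  have key : (1 + t) ^ p ≤ 2 ^ p * (1 + t ^ p) := by
    rcases le_total t 1 with h | h
    · calc (1 + t) ^ p ≤ 2 ^ p := by gcongr; linarith
        _ ≤ 2 ^ p * (1 + t ^ p) := le_mul_of_one_le_right (by positivity) (by simp [rpow_nonneg ht])
    · calc (1 + t) ^ p ≤ (2 * t) ^ p := by gcongr; linarith
        _ = 2 ^ p * t ^ p := mul_rpow (by norm_num) ht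
        _ ≤ 2 ^ p * (1 + t ^ p) := by gcongr; linarith
  rw [rpow_neg (by positivity), ← div_eq_mul_inv, div_le_div_iff₀ (by positivity) (by positivity)]
  linarith

theorem summable_pnat_rpow_neg {p : ℝ} (hp : 1 < p) : Summable fun d : ℕ+ => ((d : ℕ) : ℝ) ^ (-p) :=
  (summable_nat_rpow.2 (by linarith)).comp_injective PNat.coe_injective

theorem tsum_pnat_rpow_neg_le {p : ℝ} (hp : 1 < p) :
    ∑' d : ℕ+, ((d : ℕ) : ℝ) ^ (-p) ≤ ∑' s : ℤ, |(s : ℝ)| ^ (-p) := by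
  have hinj : Function.Injective fun d : ℕ+ => ((d : ℕ) : ℤ) :=
    Nat.cast_injective.comp PNat.coe_injective
  convert tsum_comp_le_tsum_of_inj (summable_abs_int_rpow hp) (fun _ => by positivity) hinj
    using 3 with d
  simp

theorem summable_one_div_one_add_mul_rpow {p δ : ℝ} (hp : 1 < p) (hδ : 0 < δ) :
    Summable fun d : ℕ+ => 1 / (1 + ((d : ℕ) * δ) ^ p) := by
  have h := summable_rpow_neg_add_mul (q := p - 1) (by linarith) one_pos hδ
  rw [sub_add_cancel] at h
  exact (h.mul_left (2 ^ p)).of_nonneg_of_le (fun _ => by positivity)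
    fun d => one_div_one_add_rpow_le (by linarith) (by positivity)

theorem tsum_one_div_one_add_mul_rpow_le {p δ : ℝ} (hp : 1 < p) (hδ : 0 < δ) :
    ∑' d : ℕ+, 1 / (1 + ((d : ℕ) * δ) ^ p) ≤ 2 ^ p / ((p - 1) * δ) := by
  have hs := summable_rpow_neg_add_mul (q := p - 1) (by linarith) one_pos hδ
  have ht := tsum_rpow_neg_add_mul_le (q := p - 1) (by linarith) one_pos hδ
  rw [sub_add_cancel] at hs ht
  calc ∑' d : ℕ+, 1 / (1 + ((d : ℕ) * δ) ^ p)
      ≤ ∑' d : ℕ+, 2 ^ p * (1 + (d : ℕ) * δ) ^ (-p) :=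
        (summable_one_div_one_add_mul_rpow hp hδ).tsum_le_tsum
          (fun d => one_div_one_add_rpow_le (by linarith) (by positivity)) (hs.mul_left _)
    _ ≤ 2 ^ p * (1 / ((p - 1) * δ)) := by
        rw [tsum_mul_left]
        gcongr
        simpa using ht
    _ = 2 ^ p / ((p - 1) * δ) := mul_one_div _ _

-- The `s = 0` term vanishes: `0 ^ (-p) = 0`.
def latticeConst (p : ℝ) : ℝ := 2 ^ p * ∑' s : ℤ, |(s : ℝ)| ^ (-p)

theorem latticeConst_nonneg (p : ℝ) : 0 ≤ latticeConst p :=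
  mul_nonneg (by positivity) (tsum_nonneg fun _ => by positivity)

def latticeBound (p d y : ℝ) : ℝ := 1 / (1 + (d * nint y) ^ p) + latticeConst p * d ^ (-p)

theorem latticeBound_nonneg {d : ℝ} (hd : 0 ≤ d) (p y : ℝ) : 0 ≤ latticeBound p d y := by
  have := latticeConst_nonneg p
  have : 0 ≤ nint y := abs_nonneg _
  unfold latticeBound
  positivity

theorem latticeBound_le {p d : ℝ} (hp : 0 ≤ p) (hd : 1 ≤ d) (y : ℝ) :
    latticeBound p d y ≤ 1 + latticeConst p := by
  have hnint : 0 ≤ nint y := abs_nonneg _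
  have h1 : 1 / (1 + (d * nint y) ^ p) ≤ 1 :=
    div_le_one_of_le₀ (by linarith [rpow_nonneg (by positivity : 0 ≤ d * nint y) p]) (by positivity)
  have h2 : d ^ (-p) ≤ 1 := rpow_le_one_of_one_le_of_nonpos hd (by linarith)
  unfold latticeBound
  nlinarith [latticeConst_nonneg p]

theorem one_div_one_add_mul_abs_round_add_sub_rpow_le {p d : ℝ} (hp : 0 < p) (hd : 0 < d)
    (x : ℝ) (s : ℤ) :
    1 / (1 + (d * |((round x + s : ℤ) : ℝ) - x|) ^ p) ≤
      (if s = 0 then 1 / (1 + (d * nint x) ^ p) else 0) + 2 ^ p * d ^ (-p) * |(s : ℝ)| ^ (-p) := by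
  split_ifs with hs
  · simp [hs, nint, abs_sub_comm, zero_rpow (neg_ne_zero.2 hp.ne')]
  have hs1 : (1 : ℝ) ≤ |(s : ℝ)| := by exact_mod_cast Int.one_le_abs hs
  have hfar : d * |(s : ℝ)| / 2 ≤ d * |((round x + s : ℤ) : ℝ) - x| := by
    have := abs_sub_round x
    have := abs_sub_abs_le_abs_sub (s : ℝ) (x - round x)
    rw [show (s : ℝ) - (x - round x) = ((round x + s : ℤ) : ℝ) - x by push_cast; ring] at this
    nlinarith
  have hpos : 0 < d * |(s : ℝ)| / 2 := by positivity
  calc 1 / (1 + (d * |((round x + s : ℤ) : ℝ) - x|) ^ p)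
      ≤ 1 / (d * |((round x + s : ℤ) : ℝ) - x|) ^ p := by
        gcongr
        · exact rpow_pos_of_pos (hpos.trans_le hfar) p
        · linarith
    _ ≤ 1 / (d * |(s : ℝ)| / 2) ^ p := by gcongr
    _ = 2 ^ p * d ^ (-p) * |(s : ℝ)| ^ (-p) := by
        rw [div_rpow (by positivity) (by norm_num), mul_rpow hd.le (abs_nonneg _),
          rpow_neg hd.le, rpow_neg (abs_nonneg _)]
        field_simp
    _ ≤ 0 + 2 ^ p * d ^ (-p) * |(s : ℝ)| ^ (-p) := by rw [zero_add]

theorem summable_one_div_one_add_mul_abs_sub_rpow {p d : ℝ} (hp : 1 < p) (hd : 0 < d) (x : ℝ) :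
    Summable fun j : ℤ => 1 / (1 + (d * |(j : ℝ) - x|) ^ p) := by
  rw [← (Equiv.addLeft (round x)).summable_iff]
  exact Summable.of_nonneg_of_le
    (g := fun s : ℤ => 1 / (1 + (d * |((round x + s : ℤ) : ℝ) - x|) ^ p))
    (fun _ => by positivity) (one_div_one_add_mul_abs_round_add_sub_rpow_le (by linarith) hd x)
    ((hasSum_ite_eq 0 _).summable.add ((summable_abs_int_rpow hp).mul_left _))

theorem tsum_one_div_one_add_mul_abs_sub_rpow_le {p d : ℝ} (hp : 1 < p) (hd : 0 < d) (x : ℝ) :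
    ∑' j : ℤ, 1 / (1 + (d * |(j : ℝ) - x|) ^ p) ≤ latticeBound p d x := by
  have hite := (hasSum_ite_eq (0 : ℤ) (1 / (1 + (d * nint x) ^ p))).summable
  have htail := (summable_abs_int_rpow hp).mul_left (2 ^ p * d ^ (-p))
  have hshift := (Equiv.addLeft (round x)).summable_iff.2
    (summable_one_div_one_add_mul_abs_sub_rpow hp hd x)
  rw [← (Equiv.addLeft (round x)).tsum_eq]
  calc ∑' s : ℤ, 1 / (1 + (d * |((round x + s : ℤ) : ℝ) - x|) ^ p)
      ≤ ∑' s : ℤ, ((if s = 0 then 1 / (1 + (d * nint x) ^ p) else 0) +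
          2 ^ p * d ^ (-p) * |(s : ℝ)| ^ (-p)) :=
        hshift.tsum_le_tsum (one_div_one_add_mul_abs_round_add_sub_rpow_le (by linarith) hd x)
          (hite.add htail)
    _ = latticeBound p d x := by
        rw [hite.tsum_add htail, tsum_ite_eq, tsum_mul_left, latticeBound, latticeConst]
        ring

theorem sum_totient_filter_natCast_dvd {c : ℕ} (hc : c ≠ 0) (k : ℤ) :
    ∑ d ∈ c.divisors.filter (fun d : ℕ => (d : ℤ) ∣ k), Nat.totient d = Int.gcd c k := by
  have hfilter : c.divisors.filter (fun d : ℕ => (d : ℤ) ∣ k) =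
      c.divisors.filter (· ∣ Int.gcd c k) :=
    Finset.filter_congr fun d hd => by
      rw [Int.gcd_eq_natAbs_gcd_natAbs, Nat.dvd_gcd_iff, Int.natCast_dvd, Int.natAbs_natCast]
      simp [Nat.dvd_of_mem_divisors hd]
  rw [hfilter, Nat.divisors_filter_dvd_of_dvd hc (Int.gcd_dvd_natAbs_left ..), Nat.sum_totient]

theorem tsum_ite_dvd_eq {M : Type*} [AddCommMonoid M] [TopologicalSpace M] {d : ℤ} (hd : d ≠ 0)
    (f : ℤ → M) :
    ∑' k : ℤ, (if d ∣ k then f k else 0) = ∑' j : ℤ, f (d * j) := by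
  refine ((mul_right_injective₀ hd).tsum_eq fun k hk => ?_).symm.trans (tsum_congr fun j => ?_)
  · by_contra hnot
    exact hk (if_neg fun ⟨j, hj⟩ => hnot ⟨j, hj.symm⟩)
  · simp

theorem tsum_gcd_mul_eq {c : ℕ} (hc : c ≠ 0) {f : ℤ → ℝ} (hf : Summable f) :
    ∑' k : ℤ, (Int.gcd c k : ℝ) * f k =
      ∑ d ∈ c.divisors, (Nat.totient d : ℝ) * ∑' j : ℤ, f (d * j) := by
  have hdvd (d : ℕ) : Summable fun k : ℤ => if (d : ℤ) ∣ k then f k else 0 := by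
    have h : (fun k : ℤ => if (d : ℤ) ∣ k then f k else 0) = {k | (d : ℤ) ∣ k}.indicator f := by
      funext k
      simp only [Set.indicator_apply, Set.mem_ofPred_eq]
    exact h ▸ hf.indicator _
  calc ∑' k : ℤ, (Int.gcd c k : ℝ) * f k
      = ∑' k : ℤ, ∑ d ∈ c.divisors, (Nat.totient d : ℝ) * (if (d : ℤ) ∣ k then f k else 0) := by
        refine tsum_congr fun k => ?_
        simp_rw [mul_ite, mul_zero]
        rw [← Finset.sum_filter, ← Finset.sum_mul, ← sum_totient_filter_natCast_dvd hc k]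
        push_cast
        rfl
    _ = ∑ d ∈ c.divisors, (Nat.totient d : ℝ) * ∑' j : ℤ, f (d * j) := by
        rw [Summable.tsum_finsetSum fun d _ => (hdvd d).mul_left _]
        refine Finset.sum_congr rfl fun d hd => ?_
        rw [tsum_mul_left, tsum_ite_dvd_eq (by exact_mod_cast (Nat.pos_of_mem_divisors hd).ne')]

theorem hasSum_sum_divisorsAntidiagonal {M : Type*} [AddCommMonoid M] [TopologicalSpace M]
    [ContinuousAdd M] [RegularSpace M] {G : ℕ × ℕ → M}
    (hG : Summable fun z : ℕ+ × ℕ+ => G (z.1, z.2)) :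
    HasSum (fun n : ℕ+ => ∑ x ∈ (n : ℕ).divisorsAntidiagonal, G x)
      (∑' z : ℕ+ × ℕ+, G (z.1, z.2)) := by
  have hσ : Summable fun σ : (Σ n : ℕ+, Nat.divisorsAntidiagonal n) => G σ.2.1 :=
    sigmaAntidiagonalEquivProd.summable_iff.2 hG
  rw [← sigmaAntidiagonalEquivProd.tsum_eq]
  exact hσ.hasSum.sigma fun n => Finset.hasSum _ G

theorem tsum_sum_divisorsAntidiagonal_le {G : ℕ × ℕ → ℝ} (hG : 0 ≤ G) {B : ℕ+ → ℝ}
    (hGs : ∀ e : ℕ+, Summable fun d : ℕ+ => G (d, e))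
    (hGB : ∀ e : ℕ+, ∑' d : ℕ+, G (d, e) ≤ B e) (hB : Summable B) :
    Summable (fun n : ℕ+ => ∑ x ∈ (n : ℕ).divisorsAntidiagonal, G x) ∧
      ∑' n : ℕ+, ∑ x ∈ (n : ℕ).divisorsAntidiagonal, G x ≤ ∑' e, B e := by
  have hprod : Summable fun z : ℕ+ × ℕ+ => G (z.2, z.1) :=
    (summable_prod_of_nonneg (f := fun z : ℕ+ × ℕ+ => G (z.2, z.1)) fun _ => hG _).2
      ⟨hGs, hB.of_nonneg_of_le (fun _ => tsum_nonneg fun _ => hG _) hGB⟩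
  have h := hasSum_sum_divisorsAntidiagonal hprod.prod_symm
  refine ⟨h.summable, h.tsum_eq ▸ ?_⟩
  calc ∑' z : ℕ+ × ℕ+, G (z.1, z.2) = ∑' z : ℕ+ × ℕ+, G (z.2, z.1) :=
        ((Equiv.prodComm _ _).tsum_eq fun z : ℕ+ × ℕ+ => G (z.1, z.2)).symm
    _ = ∑' e : ℕ+, ∑' d : ℕ+, G (d, e) := hprod.tsum_prod
    _ ≤ ∑' e, B e := hprod.prod.tsum_le_tsum hGB hB

def gcdSum (p α : ℝ) (c : ℕ) : ℝ :=
  ∑' k : ℤ, (Int.gcd c k : ℝ) / (1 + |(k : ℝ) - c * α| ^ p)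

theorem gcdSum_nonneg (p α : ℝ) (c : ℕ) : 0 ≤ gcdSum p α c :=
  tsum_nonneg fun _ => by positivity

theorem gcdSum_eq_sum_divisorsAntidiagonal {p : ℝ} (hp : 1 < p) (α : ℝ) {c : ℕ} (hc : c ≠ 0) :
    gcdSum p α c = ∑ x ∈ c.divisorsAntidiagonal,
      (Nat.totient x.1 : ℝ) * ∑' j : ℤ, 1 / (1 + (x.1 * |(j : ℝ) - x.2 * α|) ^ p) := by
  have hf : Summable fun k : ℤ => 1 / (1 + |(k : ℝ) - c * α| ^ p) := by
    simpa using summable_one_div_one_add_mul_abs_sub_rpow hp one_pos (c * α)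
  rw [gcdSum, tsum_congr fun k => div_eq_mul_one_div _ _, tsum_gcd_mul_eq hc hf,
    Nat.sum_divisorsAntidiagonal fun d e =>
      (Nat.totient d : ℝ) * ∑' j : ℤ, 1 / (1 + (d * |(j : ℝ) - e * α|) ^ p)]
  refine Finset.sum_congr rfl fun d hd => congrArg _ (tsum_congr fun j => ?_)
  have hc : (c : ℝ) = d * (c / d : ℕ) := by
    rw [← Nat.cast_mul, Nat.mul_div_cancel' (Nat.dvd_of_mem_divisors hd)]
  rw [hc, Int.cast_mul, Int.cast_natCast, mul_assoc, ← mul_sub, abs_mul, Nat.abs_cast]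

theorem gcdSum_le_sum_divisorsAntidiagonal {p : ℝ} (hp : 1 < p) (α : ℝ) {c : ℕ} (hc : c ≠ 0) :
    gcdSum p α c ≤ ∑ x ∈ c.divisorsAntidiagonal,
      (Nat.totient x.1 : ℝ) * latticeBound p x.1 (x.2 * α) := by
  rw [gcdSum_eq_sum_divisorsAntidiagonal hp α hc]
  refine Finset.sum_le_sum fun x hx => ?_
  have hx1 : (0 : ℝ) < x.1 := by
    exact_mod_cast Nat.pos_of_mem_divisors (Nat.fst_mem_divisors_of_mem_antidiagonal hx)
  gcongr
  exact tsum_one_div_one_add_mul_abs_sub_rpow_le hp hx1 _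

theorem gcdSum_le_mul {p : ℝ} (hp : 1 < p) (α : ℝ) {c : ℕ} (hc : c ≠ 0) :
    gcdSum p α c ≤ (1 + latticeConst p) * c := by
  refine (gcdSum_le_sum_divisorsAntidiagonal hp α hc).trans ?_
  calc ∑ x ∈ c.divisorsAntidiagonal, (Nat.totient x.1 : ℝ) * latticeBound p x.1 (x.2 * α)
      ≤ ∑ x ∈ c.divisorsAntidiagonal, (Nat.totient x.1 : ℝ) * (1 + latticeConst p) := by
        refine Finset.sum_le_sum fun x hx => ?_
        have hx1 : (1 : ℝ) ≤ x.1 := by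
          exact_mod_cast Nat.pos_of_mem_divisors (Nat.fst_mem_divisors_of_mem_antidiagonal hx)
        gcongr
        exact latticeBound_le (by linarith) hx1 _
    _ = (1 + latticeConst p) * c := by
        rw [Nat.sum_divisorsAntidiagonal fun d _ => (Nat.totient d : ℝ) * (1 + latticeConst p),
          ← Finset.sum_mul, ← Nat.cast_sum, Nat.sum_totient, mul_comm]

def pairBound (p q α X : ℝ) (x : ℕ × ℕ) : ℝ :=
  (x.2 : ℝ)⁻¹ * (X + x.1 * x.2) ^ (-(q + 1)) * latticeBound p x.1 (x.2 * α)

theorem pairBound_nonneg {X : ℝ} (hX : 0 ≤ X) (p q α : ℝ) (x : ℕ × ℕ) :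
    0 ≤ pairBound p q α X x := by
  have := latticeBound_nonneg (Nat.cast_nonneg x.1) p (x.2 * α)
  unfold pairBound
  positivity

theorem mul_gcdSum_le_sum_pairBound {p X : ℝ} (hp : 1 < p) (hX : 0 ≤ X) (q α : ℝ) {c : ℕ}
    (hc : c ≠ 0) :
    (c : ℝ)⁻¹ * (X + c) ^ (-(q + 1)) * gcdSum p α c ≤
      ∑ x ∈ c.divisorsAntidiagonal, pairBound p q α X x := by
  have hc0 : (0 : ℝ) < c := by positivity
  refine (mul_le_mul_of_nonneg_left (gcdSum_le_sum_divisorsAntidiagonal hp α hc)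
    (by positivity)).trans ?_
  rw [Finset.mul_sum]
  refine Finset.sum_le_sum fun x hx => ?_
  obtain ⟨hmul, -⟩ := Nat.mem_divisorsAntidiagonal.1 hx
  have hx1 : (0 : ℝ) < x.1 := by
    exact_mod_cast Nat.pos_of_mem_divisors (Nat.fst_mem_divisors_of_mem_antidiagonal hx)
  have hcx : (c : ℝ) = x.1 * x.2 := by exact_mod_cast hmul.symm
  have htot : (Nat.totient x.1 : ℝ) ≤ x.1 := by exact_mod_cast Nat.totient_le _
  have hLB := latticeBound_nonneg hx1.le p (x.2 * α)
  calc (c : ℝ)⁻¹ * (X + c) ^ (-(q + 1)) * ((Nat.totient x.1 : ℝ) * latticeBound p x.1 (x.2 * α))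
      ≤ (c : ℝ)⁻¹ * (X + c) ^ (-(q + 1)) * (x.1 * latticeBound p x.1 (x.2 * α)) := by gcongr
    _ = pairBound p q α X x := by
        rw [pairBound, hcx]
        field_simp

theorem pairBound_le_mul_rpow {p X : ℝ} (hp : 0 ≤ p) (hX : 0 ≤ X) (q α : ℝ) (d e : ℕ+) :
    pairBound p q α X (d, e) ≤
      (1 + latticeConst p) * ((e : ℕ) : ℝ)⁻¹ * (X + (d : ℕ) * ((e : ℕ) : ℝ)) ^ (-(q + 1)) := by
  have := latticeBound_le hp (Nat.one_le_cast.2 d.pos) (((e : ℕ) : ℝ) * α)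
  rw [pairBound, mul_comm, ← mul_assoc]
  gcongr

theorem summable_pairBound {p q X : ℝ} (hp : 0 ≤ p) (hq : 0 < q) (hX : 0 < X) (α : ℝ)
    (e : ℕ+) : Summable fun d : ℕ+ => pairBound p q α X (d, e) :=
  ((summable_rpow_neg_add_mul hq hX (Nat.cast_pos.2 e.pos)).mul_left _).of_nonneg_of_le
    (fun _ => pairBound_nonneg hX.le _ _ _ _) (pairBound_le_mul_rpow hp hX.le q α · e)

theorem tsum_pairBound_le_div_sq {p q X : ℝ} (hp : 0 ≤ p) (hq : 0 < q) (hX : 0 < X) (α : ℝ)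
    (e : ℕ+) :
    ∑' d : ℕ+, pairBound p q α X (d, e) ≤
      (1 + latticeConst p) / q * X ^ (-q) / ((e : ℕ) : ℝ) ^ 2 := by
  have he : (0 : ℝ) < (e : ℕ) := Nat.cast_pos.2 e.pos
  have hs := summable_rpow_neg_add_mul hq hX he
  calc ∑' d : ℕ+, pairBound p q α X (d, e)
      ≤ ∑' d : ℕ+, (1 + latticeConst p) * ((e : ℕ) : ℝ)⁻¹ *
          (X + (d : ℕ) * ((e : ℕ) : ℝ)) ^ (-(q + 1)) :=
        (summable_pairBound hp hq hX α e).tsum_le_tsum (pairBound_le_mul_rpow hp hX.le q α · e)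
          (hs.mul_left _)
    _ ≤ (1 + latticeConst p) * ((e : ℕ) : ℝ)⁻¹ * (X ^ (-q) / (q * (e : ℕ))) := by
        rw [tsum_mul_left]
        have := latticeConst_nonneg p
        gcongr
        exact tsum_rpow_neg_add_mul_le hq hX he
    _ = (1 + latticeConst p) / q * X ^ (-q) / ((e : ℕ) : ℝ) ^ 2 := by
        field_simp

theorem tsum_pairBound_le_div_nint {p q X α : ℝ} (hp : 1 < p) (hq : 0 < q) (hX : 0 < X)
    {e : ℕ+} (hδ : nint (((e : ℕ) : ℝ) * α) ≠ 0) :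
    ∑' d : ℕ+, pairBound p q α X (d, e) ≤
      (2 ^ p / (p - 1) + latticeConst p * ∑' s : ℤ, |(s : ℝ)| ^ (-p)) * X ^ (-q) /
        (X * (e : ℕ) * nint (((e : ℕ) : ℝ) * α)) := by
  set δ := nint (((e : ℕ) : ℝ) * α)
  have hδ0 : 0 < δ := lt_of_le_of_ne (abs_nonneg _) (Ne.symm hδ)
  have hδ1 : δ ≤ 1 := (abs_sub_round _).trans (by norm_num)
  have he : (0 : ℝ) < (e : ℕ) := Nat.cast_pos.2 e.pos
  have hK := latticeConst_nonneg p
  have hs₁ := summable_one_div_one_add_mul_rpow hp hδ0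
  have hs₂ := summable_pnat_rpow_neg hp
  have hpt (d : ℕ+) : pairBound p q α X (d, e) ≤ ((e : ℕ) : ℝ)⁻¹ * X ^ (-(q + 1)) *
      (1 / (1 + ((d : ℕ) * δ) ^ p) + latticeConst p * ((d : ℕ) : ℝ) ^ (-p)) := by
    have := latticeBound_nonneg (Nat.cast_nonneg (d : ℕ)) p (((e : ℕ) : ℝ) * α)
    refine mul_le_mul (mul_le_mul_of_nonneg_left ?_ (by positivity)) le_rfl this (by positivity)
    exact rpow_le_rpow_of_nonpos hX (le_add_of_nonneg_right (by positivity)) (by linarith)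
  calc ∑' d : ℕ+, pairBound p q α X (d, e)
      ≤ ∑' d : ℕ+, ((e : ℕ) : ℝ)⁻¹ * X ^ (-(q + 1)) *
          (1 / (1 + ((d : ℕ) * δ) ^ p) + latticeConst p * ((d : ℕ) : ℝ) ^ (-p)) :=
        (summable_pairBound (by linarith) hq hX α e).tsum_le_tsum hpt
          ((hs₁.add (hs₂.mul_left _)).mul_left _)
    _ = ((e : ℕ) : ℝ)⁻¹ * X ^ (-(q + 1)) * (∑' d : ℕ+, 1 / (1 + ((d : ℕ) * δ) ^ p) +
          latticeConst p * ∑' d : ℕ+, ((d : ℕ) : ℝ) ^ (-p)) := by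
        rw [tsum_mul_left, hs₁.tsum_add (hs₂.mul_left _), tsum_mul_left]
    _ ≤ ((e : ℕ) : ℝ)⁻¹ * X ^ (-(q + 1)) * (2 ^ p / ((p - 1) * δ) +
          latticeConst p * ((∑' s : ℤ, |(s : ℝ)| ^ (-p)) / δ)) := by
        gcongr
        · exact tsum_one_div_one_add_mul_rpow_le hp hδ0
        · exact (tsum_pnat_rpow_neg_le hp).trans
            (le_div_self (tsum_nonneg fun _ => by positivity) hδ0 hδ1)
    _ = _ := by
        rw [rpow_neg hX.le, rpow_neg hX.le, rpow_add_one hX.ne']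
        field_simp

-- `frakM α X` unfolds to `∑' l, frakMTerm α X l`.
def frakMTerm (α X : ℝ) (l : ℕ+) : ℝ :=
  if nint (((l : ℕ) : ℝ) * α) = 0 then 1 / ((l : ℕ) : ℝ) ^ 2
    else min (1 / ((l : ℕ) : ℝ) ^ 2) (1 / (X * ((l : ℕ) : ℝ) * nint (((l : ℕ) : ℝ) * α)))

theorem frakMTerm_nonneg {X : ℝ} (hX : 0 ≤ X) (α : ℝ) (l : ℕ+) : 0 ≤ frakMTerm α X l := by
  have : 0 ≤ nint (((l : ℕ) : ℝ) * α) := abs_nonneg _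
  unfold frakMTerm
  split_ifs <;> positivity

theorem frakMTerm_le (α X : ℝ) (l : ℕ+) : frakMTerm α X l ≤ 1 / ((l : ℕ) : ℝ) ^ 2 := by
  unfold frakMTerm
  split_ifs
  exacts [le_rfl, min_le_left _ _]

theorem summable_frakMTerm {X : ℝ} (hX : 0 ≤ X) (α : ℝ) : Summable (frakMTerm α X) :=
  ((summable_one_div_nat_pow.2 one_lt_two).comp_injective PNat.coe_injective).of_nonneg_of_le
    (frakMTerm_nonneg hX α) (frakMTerm_le α X)

theorem frakM_nonneg {X : ℝ} (hX : 0 ≤ X) (α : ℝ) : 0 ≤ frakM α X :=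
  tsum_nonneg (frakMTerm_nonneg hX α)

theorem le_mul_frakMTerm {α X A c : ℝ} {l : ℕ+} (hc : 0 ≤ c) (h₁ : A ≤ c / ((l : ℕ) : ℝ) ^ 2)
    (h₂ : nint (((l : ℕ) : ℝ) * α) ≠ 0 →
      A ≤ c / (X * ((l : ℕ) : ℝ) * nint (((l : ℕ) : ℝ) * α))) :
    A ≤ c * frakMTerm α X l := by
  unfold frakMTerm
  split_ifs with hδ
  · rwa [mul_one_div]
  · rw [mul_min_of_nonneg _ _ hc, mul_one_div, mul_one_div]
    exact le_min h₁ (h₂ hδ)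

def gcdConst (p q : ℝ) : ℝ :=
  (1 + latticeConst p) / q + (2 ^ p / (p - 1) + latticeConst p * ∑' s : ℤ, |(s : ℝ)| ^ (-p))

theorem tsum_pairBound_le_mul_frakMTerm {p q X : ℝ} (hp : 1 < p) (hq : 0 < q) (hX : 0 < X)
    (α : ℝ) (e : ℕ+) :
    ∑' d : ℕ+, pairBound p q α X (d, e) ≤ gcdConst p q * X ^ (-q) * frakMTerm α X e := by
  have hK := latticeConst_nonneg p
  have hZ : 0 ≤ ∑' s : ℤ, |(s : ℝ)| ^ (-p) := tsum_nonneg fun _ => by positivity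
  have hp1 : 0 < p - 1 := by linarith
  refine le_mul_frakMTerm (by unfold gcdConst; positivity) ?_ fun hδ => ?_
  · refine (tsum_pairBound_le_div_sq (by linarith) hq hX α e).trans ?_
    gcongr
    exact le_add_of_nonneg_right (by positivity)
  · refine (tsum_pairBound_le_div_nint hp hq hX hδ).trans ?_
    have : 0 ≤ nint (((e : ℕ) : ℝ) * α) := abs_nonneg _
    gcongr
    exact le_add_of_nonneg_left (by positivity)

theorem tsum_mul_gcdSum_le_mul_frakM {p q X : ℝ} (hp : 1 < p) (hq : 0 < q) (hX : 0 < X)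
    (α : ℝ) :
    ∑' c : ℕ+, ((c : ℕ) : ℝ)⁻¹ * (X + (c : ℕ)) ^ (-(q + 1)) * gcdSum p α c ≤
      gcdConst p q * X ^ (-q) * frakM α X := by
  obtain ⟨hsum, hle⟩ := tsum_sum_divisorsAntidiagonal_le (pairBound_nonneg hX.le p q α)
    (summable_pairBound (by linarith) hq hX α) (tsum_pairBound_le_mul_frakMTerm hp hq hX α)
    ((summable_frakMTerm hX.le α).mul_left _)
  have hpt (c : ℕ+) := mul_gcdSum_le_sum_pairBound hp hX.le q α c.ne_zero
  calc ∑' c : ℕ+, ((c : ℕ) : ℝ)⁻¹ * (X + (c : ℕ)) ^ (-(q + 1)) * gcdSum p α c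
      ≤ ∑' c : ℕ+, ∑ x ∈ (c : ℕ).divisorsAntidiagonal, pairBound p q α X x :=
        (hsum.of_nonneg_of_le (fun _ => mul_nonneg (by positivity) (gcdSum_nonneg p α _))
          hpt).tsum_le_tsum hpt hsum
    _ ≤ ∑' e : ℕ+, gcdConst p q * X ^ (-q) * frakMTerm α X e := hle
    _ = gcdConst p q * X ^ (-q) * frakM α X := tsum_mul_left

theorem tsum_mul_gcdSum_le {p q X : ℝ} (hp : 1 < p) (hq : 0 < q) (hX : 0 ≤ X) (α : ℝ) :
    ∑' c : ℕ+, ((c : ℕ) : ℝ)⁻¹ * (X + (c : ℕ)) ^ (-(q + 1)) * gcdSum p α c ≤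
      (1 + latticeConst p) * ∑' s : ℤ, |(s : ℝ)| ^ (-(q + 1)) := by
  have hK := latticeConst_nonneg p
  have hpt (c : ℕ+) : ((c : ℕ) : ℝ)⁻¹ * (X + (c : ℕ)) ^ (-(q + 1)) * gcdSum p α c ≤
      (1 + latticeConst p) * ((c : ℕ) : ℝ) ^ (-(q + 1)) := by
    have hc : (0 : ℝ) < (c : ℕ) := Nat.cast_pos.2 c.pos
    calc ((c : ℕ) : ℝ)⁻¹ * (X + (c : ℕ)) ^ (-(q + 1)) * gcdSum p α c
        ≤ ((c : ℕ) : ℝ)⁻¹ * (X + (c : ℕ)) ^ (-(q + 1)) * ((1 + latticeConst p) * (c : ℕ)) := by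
          gcongr
          exact gcdSum_le_mul hp α c.ne_zero
      _ = (1 + latticeConst p) * (X + (c : ℕ)) ^ (-(q + 1)) := by field_simp
      _ ≤ (1 + latticeConst p) * ((c : ℕ) : ℝ) ^ (-(q + 1)) :=
          mul_le_mul_of_nonneg_left
            (rpow_le_rpow_of_nonpos hc (le_add_of_nonneg_left hX) (by linarith)) (by positivity)
  have hs := (summable_pnat_rpow_neg (p := q + 1) (by linarith)).mul_left (1 + latticeConst p)
  calc ∑' c : ℕ+, ((c : ℕ) : ℝ)⁻¹ * (X + (c : ℕ)) ^ (-(q + 1)) * gcdSum p α c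
      ≤ ∑' c : ℕ+, (1 + latticeConst p) * ((c : ℕ) : ℝ) ^ (-(q + 1)) :=
        (hs.of_nonneg_of_le (fun _ => mul_nonneg (by positivity) (gcdSum_nonneg p α _))
          hpt).tsum_le_tsum hpt hs
    _ ≤ (1 + latticeConst p) * ∑' s : ℤ, |(s : ℝ)| ^ (-(q + 1)) := by
        rw [tsum_mul_left]
        gcongr
        exact tsum_pnat_rpow_neg_le (by linarith)

/-- **Lemma 7.3.** -/
theorem gcd_weighted_double_sum_estimate (η : ℝ) (hη : 0 < η) (m : ℕ) (hm : 3 ≤ m) :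
    ∃ C : ℝ, 0 < C ∧ ∀ (α X : ℝ), 0 < X →
      (1 ≤ X →
        (∑' c : ℕ+, (((c : ℕ) : ℝ))⁻¹ * (X + ((c : ℕ) : ℝ)) ^ ((1:ℝ) - (m : ℝ)) *
            ∑' k : ℤ, (Int.gcd ((c : ℕ) : ℤ) k : ℝ) /
              (1 + |(k : ℝ) - ((c : ℕ) : ℝ) * α| ^ (1 + η))) ≤
          C * X ^ ((2:ℝ) - (m : ℝ)) * frakM α X) ∧
      (X < 1 →
        (∑' c : ℕ+, (((c : ℕ) : ℝ))⁻¹ * (X + ((c : ℕ) : ℝ)) ^ ((1:ℝ) - (m : ℝ)) *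
            ∑' k : ℤ, (Int.gcd ((c : ℕ) : ℤ) k : ℝ) /
              (1 + |(k : ℝ) - ((c : ℕ) : ℝ) * α| ^ (1 + η))) ≤ C) := by
  have hp : 1 < 1 + η := by linarith
  have hq : 0 < (m : ℝ) - 2 := by
    have : (3 : ℝ) ≤ m := by exact_mod_cast hm
    linarith
  have hK := latticeConst_nonneg (1 + η)
  have hZ : 0 ≤ ∑' s : ℤ, |(s : ℝ)| ^ (-(m - 2 + 1 : ℝ)) := tsum_nonneg fun _ => by positivity
  have hC : 0 < gcdConst (1 + η) (m - 2) := by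
    have : 0 ≤ ∑' s : ℤ, |(s : ℝ)| ^ (-(1 + η)) := tsum_nonneg fun _ => by positivity
    unfold gcdConst
    positivity
  rw [show (1 : ℝ) - m = -((m - 2) + 1) by ring, show (2 : ℝ) - m = -(m - 2) by ring]
  refine ⟨gcdConst (1 + η) (m - 2) + (1 + latticeConst (1 + η)) *
    ∑' s : ℤ, |(s : ℝ)| ^ (-(m - 2 + 1 : ℝ)), by positivity,
    fun α X hX => ⟨fun _ => ?_, fun _ => ?_⟩⟩
  · refine (tsum_mul_gcdSum_le_mul_frakM hp hq hX α).trans ?_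
    have := frakM_nonneg hX.le α
    gcongr
    exact le_add_of_nonneg_right (by positivity)
  · exact (tsum_mul_gcdSum_le hp hq hX.le α).trans (le_add_of_nonneg_left hC.le)

end
end

section
/- There exists an absolute constant C > 0 such that for every q ∈ ℤ⁺, every α ∈ ℝ and every real X ≥ 1: | ∑_{1 ≤ k ≤ X} φ(kq) e(kα) | ≤ C · σ₁(q) · X² · ∑_{1 ≤ j ≤ X} min(1/j², 1/(Xj⟨jα⟩)), where both sums run over integers in the indicated ranges and a term on the right with ⟨jα⟩ = 0 is read as 1/j² (convention 1/0 = ∞). -/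
open Real

noncomputable section

/-! Euler's product formula gives `φ(kq) = φ(q) ∑_{bm = k, (b,q) = 1} μ(b) m`, so the sum is
`φ(q) ∑_{b ≤ X} μ(b) [(b,q) = 1] ∑_{m ≤ X/b} m e(bα)^m`. The inner sum is at most `(X/b)²`
trivially, and at most `(X/b) / (2⟨bα⟩)` by writing it as a sum of `X/b` tails of a geometric
series with ratio `e(bα)`, each bounded by `2 / |e(bα) - 1| ≤ 1 / (2⟨bα⟩)`. Finally
`φ(q) ≤ q ≤ σ₁(q)`, so `C = 1` works. -/

open Finset ArithmeticFunction
open scoped ArithmeticFunction.Moebius Nat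

namespace ArithmeticFunction

theorem IsMultiplicative.prodPrimeFactors_one_sub {R : Type*} [CommRing R]
    {f : ArithmeticFunction R} (hf : f.IsMultiplicative) {n : ℕ} (hn : n ≠ 0) :
    ∏ p ∈ n.primeFactors, (1 - f p) = ∑ d ∈ n.divisors, μ d * f d := by
  have hsq : {d ∈ n.divisors | Squarefree d} = (UniqueFactorizationMonoid.radical n).divisors := by
    rw [← Nat.divisors_filter_squarefree_of_squarefree UniqueFactorizationMonoid.squarefree_radical]
    ext d
    simp only [mem_filter, Nat.mem_divisors, ne_eq, UniqueFactorizationMonoid.radical_ne_zero,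
      not_false_eq_true, and_true, hn]
    exact ⟨fun ⟨h, hd⟩ => ⟨(UniqueFactorizationMonoid.dvd_radical_iff hd.isRadical hn).2 h, hd⟩,
      fun ⟨h, hd⟩ => ⟨(UniqueFactorizationMonoid.dvd_radical_iff hd.isRadical hn).1 h, hd⟩⟩
  rw [← Nat.primeFactors_radical, hf.prodPrimeFactors_one_sub_of_squarefree _
    UniqueFactorizationMonoid.squarefree_radical, ← hsq, sum_filter_of_ne]
  intro d _ hd
  by_contra hsf
  simp [moebius_eq_zero_of_not_squarefree hsf] at hd

def coprimeInv (q : ℕ) : ArithmeticFunction ℚ :=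
  ⟨fun b => if b.Coprime q then (b : ℚ)⁻¹ else 0, by simp⟩

theorem coprimeInv_apply (q b : ℕ) :
    coprimeInv q b = if b.Coprime q then (b : ℚ)⁻¹ else 0 := rfl

theorem isMultiplicative_coprimeInv (q : ℕ) : (coprimeInv q).IsMultiplicative := by
  refine ⟨by simp [coprimeInv_apply], fun {m n} _ => ?_⟩
  simp only [coprimeInv_apply, Nat.coprime_mul_iff_left, Nat.cast_mul, mul_inv]
  split_ifs <;> simp_all

end ArithmeticFunction

def moebiusCoprime (q d : ℕ) : ℤ := if d.Coprime q then μ d else 0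

theorem abs_moebiusCoprime_le_one (q d : ℕ) : |moebiusCoprime q d| ≤ 1 := by
  unfold moebiusCoprime
  split_ifs
  · exact abs_moebius_le_one
  · simp

theorem prod_primeFactors_one_sub_coprimeInv {q : ℕ} (hq : q ≠ 0) (k : ℕ) :
    ∏ p ∈ k.primeFactors, (1 - coprimeInv q p) =
      ∏ p ∈ k.primeFactors \ q.primeFactors, (1 - (p : ℚ)⁻¹) := by
  rw [sdiff_eq_filter, prod_filter]
  refine prod_congr rfl fun p hp => ?_
  have hp : p.Prime := Nat.prime_of_mem_primeFactors hp
  simp only [coprimeInv_apply, hp.coprime_iff_not_dvd, Nat.mem_primeFactors, hp]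
  split_ifs <;> simp_all

theorem totient_mul_eq_totient_mul_sum {q : ℕ} (hq : q ≠ 0) (k : ℕ) :
    (φ (k * q) : ℤ) = φ q * ∑ x ∈ k.divisorsAntidiagonal, moebiusCoprime q x.1 * x.2 := by
  rcases eq_or_ne k 0 with rfl | hk
  · simp
  have key : (φ (k * q) : ℚ) = φ q * (k * ∏ p ∈ k.primeFactors, (1 - coprimeInv q p)) := by
    rw [prod_primeFactors_one_sub_coprimeInv hq, Nat.totient_eq_mul_prod_factors,
      Nat.totient_eq_mul_prod_factors, Nat.primeFactors_mul hk hq,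
      ← sdiff_union_self_eq_union, prod_union sdiff_disjoint]
    push_cast
    ring
  rw [(isMultiplicative_coprimeInv q).prodPrimeFactors_one_sub hk, mul_sum] at key
  rw [Nat.sum_divisorsAntidiagonal (fun d m => moebiusCoprime q d * m)]
  have term : ∀ d ∈ k.divisors,
      (k : ℚ) * (μ d * coprimeInv q d) = moebiusCoprime q d * ((k / d : ℕ) : ℚ) := by
    intro d hd
    have hd0 : (d : ℚ) ≠ 0 := by exact_mod_cast Nat.pos_of_mem_divisors hd |>.ne'
    rw [Nat.cast_div (Nat.dvd_of_mem_divisors hd) hd0, coprimeInv_apply, moebiusCoprime]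
    split_ifs
    · field_simp
    · simp
  rw [sum_congr rfl term] at key
  apply Int.cast_injective (α := ℚ)
  push_cast
  exact key

theorem sum_Icc_sum_divisorsAntidiagonal {M : Type*} [AddCommMonoid M] (N : ℕ)
    (F : ℕ → ℕ → M) :
    ∑ k ∈ Icc 1 N, ∑ x ∈ k.divisorsAntidiagonal, F x.1 x.2 =
      ∑ d ∈ Icc 1 N, ∑ m ∈ Icc 1 (N / d), F d m := by
  set r := {x ∈ Icc 1 N ×ˢ Icc 1 N | x.1 * x.2 ≤ N}
  have hfiber : ∀ k ∈ Icc 1 N, k.divisorsAntidiagonal = {x ∈ r | x.1 * x.2 = k} := by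
    intro k hk
    ext ⟨d, m⟩
    simp only [mem_Icc, Nat.mem_divisorsAntidiagonal, mem_filter, mem_product, r] at hk ⊢
    constructor
    · rintro ⟨rfl, -⟩
      have := Nat.pos_of_mul_pos_right (a := d) (b := m) (by omega)
      have := Nat.pos_of_mul_pos_left (a := d) (b := m) (by omega)
      refine ⟨⟨⟨⟨?_, ?_⟩, ?_, ?_⟩, hk.2⟩, rfl⟩ <;> nlinarith
    · rintro ⟨-, rfl⟩
      omega
  have hmem : ∀ x : ℕ × ℕ, x ∈ r ↔ x.1 ∈ Icc 1 N ∧ x.2 ∈ Icc 1 (N / x.1) := by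
    rintro ⟨d, m⟩
    simp only [mem_Icc, mem_filter, mem_product, r]
    constructor
    · rintro ⟨⟨⟨hd, -⟩, hm, -⟩, h⟩
      exact ⟨⟨hd, by nlinarith⟩, hm, (Nat.le_div_iff_mul_le hd).2 (by linarith)⟩
    · rintro ⟨⟨hd, hdN⟩, hm, hmN⟩
      have h := (Nat.le_div_iff_mul_le hd).1 hmN
      exact ⟨⟨⟨hd, hdN⟩, hm, by nlinarith⟩, by linarith⟩
  have hmaps : ∀ x ∈ r, x.1 * x.2 ∈ Icc 1 N := by
    intro x hx
    simp only [mem_Icc, mem_filter, mem_product, r] at hx ⊢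
    exact ⟨Nat.mul_le_mul hx.1.1.1 hx.1.2.1, hx.2⟩
  rw [sum_congr rfl fun k hk => by rw [hfiber k hk],
    sum_fiberwise_of_maps_to hmaps (fun x => F x.1 x.2),
    sum_finset_product' r _ (fun d => Icc 1 (N / d)) hmem]

theorem sum_Icc_totient_mul_mul {R : Type*} [CommRing R] {q : ℕ} (hq : q ≠ 0) (N : ℕ)
    (w : ℕ → R) :
    ∑ k ∈ Icc 1 N, (φ (k * q) : R) * w k =
      φ q * ∑ d ∈ Icc 1 N, (moebiusCoprime q d : R) * ∑ m ∈ Icc 1 (N / d), (m : R) * w (d * m) := by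
  have hk : ∀ k, (φ (k * q) : R) * w k =
      φ q * ∑ x ∈ k.divisorsAntidiagonal, (moebiusCoprime q x.1 : R) * (x.2 * w (x.1 * x.2)) := by
    intro k
    have h := congrArg (Int.cast : ℤ → R) (totient_mul_eq_totient_mul_sum hq k)
    push_cast at h
    rw [h, mul_assoc, sum_mul]
    congr 1
    refine sum_congr rfl fun x hx => ?_
    rw [(Nat.mem_divisorsAntidiagonal.1 hx).1, mul_assoc]
  simp_rw [hk, ← mul_sum, sum_Icc_sum_divisorsAntidiagonal N
    (fun d m => (moebiusCoprime q d : R) * (m * w (d * m))), mul_sum]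

theorem totient_le_sum_divisors {q : ℕ} (hq : q ≠ 0) : φ q ≤ ∑ d ∈ q.divisors, d :=
  (Nat.totient_le q).trans (single_le_sum (fun d _ => Nat.zero_le d) (Nat.mem_divisors_self q hq))

section GeometricSums

theorem norm_sum_Ico_pow_le {𝕜 : Type*} [NormedDivisionRing 𝕜] {z : 𝕜} (hz : ‖z‖ ≤ 1)
    (hz1 : z ≠ 1) (a b : ℕ) : ‖∑ m ∈ Ico a b, z ^ m‖ ≤ 2 / ‖z - 1‖ := by
  rcases lt_or_ge b a with hba | hab
  · rw [Ico_eq_empty_of_le hba.le, sum_empty, norm_zero]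
    positivity
  rw [geom_sum_Ico hz1 hab, norm_div]
  gcongr
  calc ‖z ^ b - z ^ a‖ ≤ ‖z‖ ^ b + ‖z‖ ^ a := by
        rw [← norm_pow, ← norm_pow]; exact norm_sub_le _ _
    _ ≤ 1 + 1 := by gcongr <;> exact pow_le_one₀ (norm_nonneg z) hz
    _ = 2 := one_add_one_eq_two

theorem sum_Icc_natCast_mul_pow {R : Type*} [Semiring R] (z : R) (M : ℕ) :
    ∑ m ∈ Icc 1 M, (m : R) * z ^ m = ∑ t ∈ Icc 1 M, ∑ m ∈ Icc t M, z ^ m := by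
  rw [sum_comm' (t' := Icc 1 M) (s' := fun m => Icc 1 m)
    (by intro t m; simp only [mem_Icc]; omega)]
  refine sum_congr rfl fun m _ => ?_
  rw [sum_const, Nat.card_Icc, Nat.add_sub_cancel, nsmul_eq_mul]

variable {𝕜 : Type*} [RCLike 𝕜] {z : 𝕜}

theorem norm_sum_Icc_natCast_mul_pow_le_sq (hz : ‖z‖ ≤ 1) (M : ℕ) :
    ‖∑ m ∈ Icc 1 M, (m : 𝕜) * z ^ m‖ ≤ (M : ℝ) ^ 2 := by
  calc ‖∑ m ∈ Icc 1 M, (m : 𝕜) * z ^ m‖ ≤ ∑ m ∈ Icc 1 M, (M : ℝ) := by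
        refine norm_sum_le_of_le _ fun m hm => ?_
        rw [norm_mul, norm_pow, RCLike.norm_natCast]
        calc (m : ℝ) * ‖z‖ ^ m ≤ M * 1 := by
              gcongr
              · exact (mem_Icc.1 hm).2
              · exact pow_le_one₀ (norm_nonneg z) hz
          _ = M := mul_one _
    _ = (M : ℝ) ^ 2 := by rw [sum_const, Nat.card_Icc, Nat.add_sub_cancel, nsmul_eq_mul, sq]

theorem norm_sum_Icc_natCast_mul_pow_le_of_ne_one (hz : ‖z‖ ≤ 1) (hz1 : z ≠ 1) (M : ℕ) :
    ‖∑ m ∈ Icc 1 M, (m : 𝕜) * z ^ m‖ ≤ M * (2 / ‖z - 1‖) := by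
  rw [sum_Icc_natCast_mul_pow]
  calc ‖∑ t ∈ Icc 1 M, ∑ m ∈ Icc t M, z ^ m‖ ≤ ∑ t ∈ Icc 1 M, 2 / ‖z - 1‖ := by
        refine norm_sum_le_of_le _ fun t _ => ?_
        rw [← Ico_add_one_right_eq_Icc]
        exact norm_sum_Ico_pow_le hz hz1 t (M + 1)
    _ = M * (2 / ‖z - 1‖) := by rw [sum_const, Nat.card_Icc, Nat.add_sub_cancel, nsmul_eq_mul]

end GeometricSums

theorem e2πi_eq_exp_I_mul (x : ℝ) : e2πi x = Complex.exp (Complex.I * (2 * π * x : ℝ)) := by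
  rw [e2πi]; push_cast; ring_nf

theorem norm_e2πi (x : ℝ) : ‖e2πi x‖ = 1 := by
  rw [e2πi_eq_exp_I_mul, mul_comm, Complex.norm_exp_ofReal_mul_I]

theorem e2πi_pow (x : ℝ) (m : ℕ) : e2πi x ^ m = e2πi (m * x) := by
  rw [e2πi, e2πi, ← Complex.exp_nat_mul]; push_cast; ring_nf

theorem nint_nonneg (x : ℝ) : 0 ≤ nint x := abs_nonneg _

theorem four_mul_nint_le_norm_e2πi_sub_one (x : ℝ) : 4 * nint x ≤ ‖e2πi x - 1‖ := by
  set δ := x - round x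
  have hδ : |π * δ| ≤ π / 2 := by
    rw [abs_mul, abs_of_pos pi_pos]
    nlinarith [abs_sub_round x, pi_pos]
  have hsin : |sin (π * x)| = |sin (π * δ)| := by
    rw [show π * x = π * δ + (round x : ℤ) * π by ring, sin_add_int_mul_pi, abs_mul,
      abs_neg_one_zpow, one_mul]
  calc 4 * nint x = 2 * (2 / π * |π * δ|) := by
        rw [abs_mul, abs_of_pos pi_pos, nint]; field_simp; ring
    _ ≤ 2 * |sin (π * δ)| := by gcongr; exact mul_abs_le_abs_sin hδ
    _ = ‖e2πi x - 1‖ := by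
        rw [e2πi_eq_exp_I_mul, Complex.norm_exp_I_mul_ofReal_sub_one, ← hsin, Real.norm_eq_abs,
          abs_mul, abs_two]
        ring_nf

theorem sum_Icc_totient_mul_e2πi {q : ℕ} (hq : q ≠ 0) (N : ℕ) (α : ℝ) :
    ∑ k ∈ Icc 1 N, (φ (k * q) : ℂ) * e2πi (k * α) =
      φ q * ∑ d ∈ Icc 1 N,
        (moebiusCoprime q d : ℂ) * ∑ m ∈ Icc 1 (N / d), (m : ℂ) * e2πi (d * α) ^ m := by
  have hw : ∀ d m : ℕ, e2πi (((d * m : ℕ) : ℝ) * α) = e2πi (d * α) ^ m := fun d m => by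
    rw [e2πi_pow]; push_cast; ring_nf
  rw [sum_Icc_totient_mul_mul hq N (fun k => e2πi (k * α))]
  simp only [hw]

def minTerm (X α : ℝ) (j : ℕ) : ℝ :=
  if nint ((j : ℝ) * α) = 0 then 1 / (j : ℝ) ^ 2
  else min (1 / (j : ℝ) ^ 2) (1 / (X * (j : ℝ) * nint ((j : ℝ) * α)))

theorem minTerm_nonneg {X : ℝ} (hX : 0 ≤ X) (α : ℝ) (j : ℕ) : 0 ≤ minTerm X α j := by
  have := nint_nonneg (j * α)
  unfold minTerm
  split_ifs
  · positivity
  · exact le_min (by positivity) (by positivity)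

theorem norm_sum_Icc_natCast_mul_e2πi_pow_le {X : ℝ} (hX : 0 < X) (α : ℝ) {d M : ℕ}
    (hd : 0 < d) (hMd : (M : ℝ) * d ≤ X) :
    ‖∑ m ∈ Icc 1 M, (m : ℂ) * e2πi (d * α) ^ m‖ ≤ X ^ 2 * minTerm X α d := by
  have hd' : (0 : ℝ) < d := by exact_mod_cast hd
  have hsq : ‖∑ m ∈ Icc 1 M, (m : ℂ) * e2πi (d * α) ^ m‖ ≤ X ^ 2 * (1 / (d : ℝ) ^ 2) := by
    refine (norm_sum_Icc_natCast_mul_pow_le_sq (norm_e2πi _).le M).trans ?_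
    rw [mul_one_div, ← div_pow]
    gcongr
    rwa [le_div_iff₀ hd']
  unfold minTerm
  split_ifs with h0
  · exact hsq
  rw [mul_min_of_nonneg _ _ (sq_nonneg X)]
  refine le_min hsq ?_
  have hpos : 0 < nint (d * α) := (nint_nonneg _).lt_of_ne' h0
  have hnorm := four_mul_nint_le_norm_e2πi_sub_one (d * α)
  have hne : e2πi (d * α) ≠ 1 := fun h => by rw [h, sub_self, norm_zero] at hnorm; linarith
  calc ‖∑ m ∈ Icc 1 M, (m : ℂ) * e2πi (d * α) ^ m‖
      ≤ M * (2 / ‖e2πi (d * α) - 1‖) :=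
        norm_sum_Icc_natCast_mul_pow_le_of_ne_one (norm_e2πi _).le hne M
    _ ≤ M * (2 / (4 * nint (d * α))) := by gcongr
    _ ≤ X ^ 2 * (1 / (X * d * nint (d * α))) := by
        field_simp
        nlinarith

/-- **Lemma 8.2.** There is an absolute constant `C > 0` such that for every
`q ∈ ℤ⁺`, `α ∈ ℝ` and `X ≥ 1`:
`|∑_{1≤k≤X} φ(kq) e(kα)| ≤ C σ₁(q) X² ∑_{1≤j≤X} min(1/j², 1/(Xj⟨jα⟩))`. -/
theorem totient_exponential_sum_bound :
    ∃ C : ℝ, 0 < C ∧ ∀ (q : ℕ+) (α X : ℝ), 1 ≤ X →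
      ‖∑ k ∈ Finset.Icc 1 ⌊X⌋₊, (Nat.totient (k * (q : ℕ)) : ℂ) * e2πi ((k : ℝ) * α)‖ ≤
        C * (∑ d ∈ (q : ℕ).divisors, (d : ℝ)) * X ^ 2 *
          ∑ j ∈ Finset.Icc 1 ⌊X⌋₊,
            (if nint ((j : ℝ) * α) = 0 then 1 / (j : ℝ) ^ 2
             else min (1 / (j : ℝ) ^ 2) (1 / (X * (j : ℝ) * nint ((j : ℝ) * α)))) := by
  refine ⟨1, one_pos, fun q α X hX => ?_⟩
  set N := ⌊X⌋₊
  have hX0 : 0 < X := one_pos.trans_le hX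
  have hterm : ∀ d ∈ Icc 1 N,
      ‖(moebiusCoprime q d : ℂ) * ∑ m ∈ Icc 1 (N / d), (m : ℂ) * e2πi (d * α) ^ m‖ ≤
        X ^ 2 * minTerm X α d := by
    intro d hd
    have hd : 0 < d := (mem_Icc.1 hd).1
    have hMd : ((N / d : ℕ) : ℝ) * d ≤ X :=
      (by exact_mod_cast Nat.div_mul_le_self N d : ((N / d : ℕ) : ℝ) * d ≤ N).trans
        (Nat.floor_le hX0.le)
    rw [norm_mul, Complex.norm_intCast]
    exact (mul_le_of_le_one_left (norm_nonneg _)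
      (by exact_mod_cast abs_moebiusCoprime_le_one q d)).trans
      (norm_sum_Icc_natCast_mul_e2πi_pow_le hX0 α hd hMd)
  rw [sum_Icc_totient_mul_e2πi q.ne_zero]
  calc _ ≤ φ q * ∑ d ∈ Icc 1 N, X ^ 2 * minTerm X α d := by
        rw [norm_mul, Complex.norm_natCast]
        exact mul_le_mul_of_nonneg_left ((norm_sum_le _ _).trans (sum_le_sum hterm))
          (by positivity)
    _ ≤ 1 * (∑ d ∈ (q : ℕ).divisors, (d : ℝ)) * X ^ 2 * ∑ j ∈ Icc 1 N, minTerm X α j := by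
        rw [← mul_sum, one_mul, mul_assoc, ← Nat.cast_sum]
        exact mul_le_mul_of_nonneg_right (Nat.cast_le.2 (totient_le_sum_divisors q.ne_zero))
          (mul_nonneg (sq_nonneg X) (sum_nonneg fun j _ => minTerm_nonneg hX0.le α j))

end
end

section
/- For every real m ≥ 2 there exist constants 0 < c_m ≤ C_m such that for all a > 0 and all 0 < δ ≤ 1: c_m · a⁻¹ · min(1, (δ/a)^{m−1}) ≤ ∫_{{θ ∈ (−π,π) : |sin θ| < δ}} min(1, (|sin θ|/a)^m) · sin⁻²θ dθ ≤ C_m · a⁻¹ · min(1, (δ/a)^{m−1}). -/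
open MeasureTheory Real

noncomputable section


lemma min_scale_le {k x : ℝ} (hk0 : 0 ≤ k) (hk1 : k ≤ 1) (hx : 0 ≤ x) :
    k * min 1 x ≤ min 1 (k * x) := by
  have h1 := min_le_left 1 x
  have h2 := min_le_right 1 x
  have h3 : (0:ℝ) ≤ min 1 x := le_min zero_le_one hx
  exact le_min (by nlinarith) (by nlinarith)

lemma min_scale_ge {k x : ℝ} (hk1 : 1 ≤ k) (hx : 0 ≤ x) :
    min 1 (k * x) ≤ k * min 1 x := by
  rcases le_total x 1 with h | h
  · rw [min_eq_right h]; exact min_le_right _ _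
  · rw [min_eq_left h]
    have := min_le_left 1 (k * x)
    nlinarith

lemma g_measurable (m a : ℝ) : Measurable (fun t : ℝ => min 1 ((t / a) ^ m) / t ^ 2) := by
  fun_prop

lemma g_nonneg (m a : ℝ) {t : ℝ} (ht : 0 ≤ t) (ha : 0 ≤ a) :
    0 ≤ min 1 ((t / a) ^ m) / t ^ 2 :=
  div_nonneg (le_min zero_le_one (Real.rpow_nonneg (div_nonneg ht ha) m)) (sq_nonneg t)

lemma g_le (m a b : ℝ) (hm : 2 ≤ m) (ha : 0 < a) {t : ℝ} (ht : t ∈ Set.Ioo 0 b) :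
    min 1 ((t / a) ^ m) / t ^ 2 ≤ a ^ (-m) * b ^ (m - 2) := by
  obtain ⟨ht0, htb⟩ := ht
  have ht2 : (0:ℝ) < t ^ 2 := by positivity
  have h1 : min 1 ((t / a) ^ m) / t ^ 2 ≤ ((t / a) ^ m) / t ^ 2 := by
    gcongr
    exact min_le_right _ _
  refine h1.trans ?_
  rw [Real.div_rpow ht0.le ha.le]
  have key : t ^ m / a ^ m / t ^ 2 = (a ^ m)⁻¹ * t ^ (m - 2) := by
    rw [show t ^ 2 = t ^ ((2:ℕ):ℝ) from (Real.rpow_natCast t 2).symm, div_right_comm,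
      ← Real.rpow_sub ht0]
    push_cast
    rw [div_eq_mul_inv, mul_comm]
  rw [key, Real.rpow_neg ha.le]
  have : t ^ (m - 2) ≤ b ^ (m - 2) :=
    Real.rpow_le_rpow ht0.le htb.le (by linarith)
  gcongr

lemma g_integrableOn (m a b : ℝ) (hm : 2 ≤ m) (ha : 0 < a) :
    IntegrableOn (fun t : ℝ => min 1 ((t / a) ^ m) / t ^ 2) (Set.Ioo 0 b) := by
  apply Measure.integrableOn_of_bounded (M := a ^ (-m) * b ^ (m - 2))
    measure_Ioo_lt_top.ne ((g_measurable m a).aestronglyMeasurable)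
  filter_upwards [ae_restrict_mem measurableSet_Ioo] with t ht
  rw [Real.norm_eq_abs, abs_of_nonneg (g_nonneg m a ht.1.le ha.le)]
  exact g_le m a b hm ha ht

lemma g_eq_of_le (m a : ℝ) (hm : 0 ≤ m) (ha : 0 < a) {t : ℝ} (ht0 : 0 < t) (hta : t ≤ a) :
    min 1 ((t / a) ^ m) / t ^ 2 = (a ^ m)⁻¹ * t ^ (m - 2) := by
  rw [min_eq_right (Real.rpow_le_one (by positivity) ((div_le_one ha).mpr hta) hm),
    Real.div_rpow ht0.le ha.le,
    show t ^ 2 = t ^ ((2:ℕ):ℝ) from (Real.rpow_natCast t 2).symm, div_right_comm,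
    ← Real.rpow_sub ht0]
  push_cast
  rw [div_eq_mul_inv, mul_comm]

lemma G_eval_small (m a c : ℝ) (hm : 2 ≤ m) (ha : 0 < a) (hc : 0 < c) (hca : c ≤ a) :
    (∫ t in Set.Ioc 0 c, min 1 ((t / a) ^ m) / t ^ 2)
      = (a ^ m)⁻¹ * (c ^ (m - 1) / (m - 1)) := by
  rw [setIntegral_congr_fun measurableSet_Ioc
      (fun t ht => g_eq_of_le m a (by linarith) ha ht.1 (le_trans ht.2 hca)),
    integral_const_mul]
  congr 1
  rw [integral_Ioc_eq_integral_Ioo, ← MeasureTheory.integral_Ioc_eq_integral_Ioo,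
    ← intervalIntegral.integral_of_le hc.le,
    integral_rpow (Or.inl (by linarith : (-1:ℝ) < m - 2)),
    Real.zero_rpow (by intro h; linarith [h] : m - 2 + 1 ≠ 0),
    show m - 2 + 1 = m - 1 by ring]
  ring

lemma G_eval_tail (m a b : ℝ) (hm : 0 ≤ m) (ha : 0 < a) (hab : a < b) :
    (∫ t in Set.Ioo a b, min 1 ((t / a) ^ m) / t ^ 2) = a⁻¹ - b⁻¹ := by
  have hb : 0 < b := ha.trans hab
  rw [setIntegral_congr_fun measurableSet_Ioo (fun t ht => ?_)]
  rotate_left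
  · exact fun t => t ^ (-2 : ℝ)
  · have ht0 : (0:ℝ) < t := ha.trans ht.1
    rw [min_eq_left (Real.one_le_rpow ((one_le_div ha).mpr ht.1.le) hm),
      show (-2:ℝ) = -((2:ℕ):ℝ) by norm_num, Real.rpow_neg ht0.le, Real.rpow_natCast,
      one_div]
  · rw [← MeasureTheory.integral_Ioc_eq_integral_Ioo,
      ← intervalIntegral.integral_of_le hab.le,
      integral_rpow (Or.inr ⟨by norm_num, Set.notMem_uIcc_of_lt ha hb⟩),
      show (-2:ℝ) + 1 = -1 by norm_num, Real.rpow_neg_one, Real.rpow_neg_one]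
    ring

lemma G_bounds (m a b : ℝ) (hm : 2 ≤ m) (ha : 0 < a) (hb : 0 < b) :
    (m - 1)⁻¹ * a⁻¹ * min 1 ((b / a) ^ (m - 1))
        ≤ (∫ t in Set.Ioo 0 b, min 1 ((t / a) ^ m) / t ^ 2) ∧
      (∫ t in Set.Ioo 0 b, min 1 ((t / a) ^ m) / t ^ 2)
        ≤ (m / (m - 1)) * a⁻¹ * min 1 ((b / a) ^ (m - 1)) := by
  have hm1 : (0:ℝ) < m - 1 := by linarith
  rcases le_or_gt b a with hba | hab
  · -- b ≤ a
    have hmin : min 1 ((b / a) ^ (m - 1)) = (b / a) ^ (m - 1) :=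
      min_eq_right (Real.rpow_le_one (by positivity) ((div_le_one ha).mpr hba) hm1.le)
    have heval : (∫ t in Set.Ioo 0 b, min 1 ((t / a) ^ m) / t ^ 2)
        = (a ^ m)⁻¹ * (b ^ (m - 1) / (m - 1)) := by
      rw [← MeasureTheory.integral_Ioc_eq_integral_Ioo]
      exact G_eval_small m a b hm ha hb hba
    have hEq : (m - 1)⁻¹ * a⁻¹ * ((b / a) ^ (m - 1))
        = (a ^ m)⁻¹ * (b ^ (m - 1) / (m - 1)) := by
      have h2 : a ^ m = a ^ (m - 1) * a := by
        rw [show m = (m - 1) + 1 by ring, Real.rpow_add ha, Real.rpow_one]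
        ring_nf
      rw [Real.div_rpow hb.le ha.le, h2, mul_inv]
      have h1 : a ^ (m - 1) ≠ 0 := by positivity
      field_simp
      try ring
      try exact Or.inl trivial
    constructor
    · rw [hmin, heval, hEq]
    · rw [hmin, heval, ← hEq]
      have hP : 0 ≤ a⁻¹ * (b / a) ^ (m - 1) := by positivity
      have : (m - 1)⁻¹ ≤ m / (m - 1) := by
        rw [div_eq_mul_inv]
        nlinarith [inv_pos.mpr hm1]
      nlinarith
  · -- a < b
    have hmin : min 1 ((b / a) ^ (m - 1)) = 1 :=
      min_eq_left (Real.one_le_rpow ((one_le_div ha).mpr hab.le) hm1.le)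
    have hsplit : Set.Ioc 0 a ∪ Set.Ioo a b = Set.Ioo 0 b :=
      Set.Ioc_union_Ioo_eq_Ioo ha.le hab
    have hdisj : Disjoint (Set.Ioc 0 a) (Set.Ioo a b) := by
      rw [Set.disjoint_left]
      rintro x ⟨_, hxa⟩ ⟨hax, _⟩
      exact absurd hxa (not_le.mpr hax)
    have hint1 : IntegrableOn (fun t : ℝ => min 1 ((t / a) ^ m) / t ^ 2) (Set.Ioc 0 a) :=
      (g_integrableOn m a b hm ha).mono_set
        (fun x hx => ⟨hx.1, lt_of_le_of_lt hx.2 hab⟩)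
    have hint2 : IntegrableOn (fun t : ℝ => min 1 ((t / a) ^ m) / t ^ 2) (Set.Ioo a b) :=
      (g_integrableOn m a b hm ha).mono_set (fun x hx => ⟨ha.trans hx.1, hx.2⟩)
    have heval : (∫ t in Set.Ioo 0 b, min 1 ((t / a) ^ m) / t ^ 2)
        = a⁻¹ / (m - 1) + (a⁻¹ - b⁻¹) := by
      rw [← hsplit, MeasureTheory.setIntegral_union hdisj measurableSet_Ioo hint1 hint2,
        G_eval_small m a a hm ha ha le_rfl, G_eval_tail m a b (by linarith) ha hab]
      congr 1
      rw [← mul_div_assoc, ← Real.rpow_neg ha.le, ← Real.rpow_add ha,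
        show -m + (m - 1) = -1 by ring, Real.rpow_neg_one]
    have hbinv : 0 < b⁻¹ := inv_pos.mpr (ha.trans hab)
    have hba' : b⁻¹ ≤ a⁻¹ := by
      exact inv_anti₀ ha hab.le
    rw [hmin, heval]
    constructor
    · have e : (m - 1)⁻¹ * a⁻¹ * 1 = a⁻¹ / (m - 1) := by ring
      rw [e]; linarith
    · have e : m / (m - 1) * a⁻¹ * 1 = a⁻¹ / (m - 1) + a⁻¹ := by
        field_simp
        ring
      rw [e]; linarith


-- facts about the integrand f
lemma f_nonneg (m : ℝ) {a : ℝ} (ha : 0 ≤ a) (θ : ℝ) :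
    0 ≤ min 1 ((|Real.sin θ| / a) ^ m) / Real.sin θ ^ 2 :=
  div_nonneg (le_min zero_le_one (Real.rpow_nonneg (div_nonneg (abs_nonneg _) ha) m))
    (sq_nonneg _)

lemma f_measurable (m a : ℝ) :
    Measurable (fun θ : ℝ => min 1 ((|Real.sin θ| / a) ^ m) / Real.sin θ ^ 2) := by
  apply Measurable.div _ (by fun_prop)
  fun_prop

lemma f_bdd (m a : ℝ) (hm : 2 ≤ m) (ha : 0 < a) (θ : ℝ) :
    min 1 ((|Real.sin θ| / a) ^ m) / Real.sin θ ^ 2 ≤ a ^ (-m) := by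
  rcases eq_or_ne (Real.sin θ) 0 with h0 | h0
  · have : min 1 ((|Real.sin θ| / a) ^ m) / Real.sin θ ^ 2 = 0 := by
      simp [h0, Real.zero_rpow (by linarith : m ≠ 0)]
    rw [this]; positivity
  · have habs : 0 < |Real.sin θ| := abs_pos.mpr h0
    have hs2 : (0:ℝ) < Real.sin θ ^ 2 := by positivity
    have h1 : |Real.sin θ| ≤ 1 := abs_le.mpr ⟨Real.neg_one_le_sin θ, Real.sin_le_one θ⟩
    have h2 : |Real.sin θ| ^ m ≤ Real.sin θ ^ 2 := by
      have h3 := Real.rpow_le_rpow_of_exponent_ge habs h1 (by linarith : (2:ℝ) ≤ m)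
      rwa [show |Real.sin θ| ^ (2:ℝ) = Real.sin θ ^ 2 by
        rw [show (2:ℝ) = ((2:ℕ):ℝ) by norm_num, Real.rpow_natCast, sq_abs]] at h3
    have step : min 1 ((|Real.sin θ| / a) ^ m) / Real.sin θ ^ 2
        ≤ ((|Real.sin θ| / a) ^ m) / Real.sin θ ^ 2 := by
      gcongr
      exact min_le_right _ _
    refine step.trans ?_
    rw [Real.div_rpow (abs_nonneg _) ha.le, Real.rpow_neg ha.le, div_div,
      show (a ^ m)⁻¹ = Real.sin θ ^ 2 / (a ^ m * Real.sin θ ^ 2) by field_simp]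
    gcongr

lemma f_integrableOn (m a : ℝ) (hm : 2 ≤ m) (ha : 0 < a) {s : Set ℝ}
    (hs : MeasurableSet s) (hsub : s ⊆ Set.Ioo (-(4:ℝ)) 4) :
    IntegrableOn (fun θ : ℝ => min 1 ((|Real.sin θ| / a) ^ m) / Real.sin θ ^ 2) s := by
  apply Measure.integrableOn_of_bounded (M := a ^ (-m))
    (((measure_mono hsub).trans_lt measure_Ioo_lt_top).ne)
    (f_measurable m a).aestronglyMeasurable
  filter_upwards with θ
  rw [Real.norm_eq_abs, abs_of_nonneg (f_nonneg m ha.le θ)]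
  exact f_bdd m a hm ha θ

lemma S_measurable (δ : ℝ) :
    MeasurableSet {θ : ℝ | θ ∈ Set.Ioo (-π) π ∧ |Real.sin θ| < δ} := by
  have : {θ : ℝ | θ ∈ Set.Ioo (-π) π ∧ |Real.sin θ| < δ}
      = Set.Ioo (-π) π ∩ {θ : ℝ | |Real.sin θ| < δ} := rfl
  rw [this]
  exact measurableSet_Ioo.inter (measurableSet_lt (by fun_prop) measurable_const)

lemma S_sub (δ : ℝ) :
    {θ : ℝ | θ ∈ Set.Ioo (-π) π ∧ |Real.sin θ| < δ} ⊆ Set.Ioo (-(4:ℝ)) 4 := by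
  have hπ4 : π < 3.15 := Real.pi_lt_d2
  rintro θ ⟨⟨h1, h2⟩, _⟩
  constructor <;> nlinarith

lemma f_lower (m : ℝ) (hm : 2 ≤ m) (a δ : ℝ) (ha : 0 < a) (hδ : 0 < δ) (hδ1 : δ ≤ 1) :
    (m - 1)⁻¹ * (2 / π) ^ m * a⁻¹ * min 1 ((δ / a) ^ (m - 1)) ≤
      ∫ θ in {θ : ℝ | θ ∈ Set.Ioo (-π) π ∧ |Real.sin θ| < δ},
        min 1 ((|Real.sin θ| / a) ^ m) / Real.sin θ ^ 2 := by
  have hm1 : (0:ℝ) < m - 1 := by linarith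
  have hπ : (0:ℝ) < π := Real.pi_pos
  have hπ3 : (3:ℝ) < π := Real.pi_gt_three
  have hδπ : δ < π / 2 := by nlinarith
  have hsub1 : Set.Ioo 0 δ ⊆ {θ : ℝ | θ ∈ Set.Ioo (-π) π ∧ |Real.sin θ| < δ} := by
    rintro θ ⟨h0, hθδ⟩
    have hθπ : θ < π := by nlinarith
    refine ⟨⟨by linarith, hθπ⟩, ?_⟩
    rw [abs_of_nonneg (Real.sin_nonneg_of_nonneg_of_le_pi h0.le hθπ.le)]
    exact lt_of_le_of_lt (Real.sin_le h0.le) hθδ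
  have ha' : (0:ℝ) < π / 2 * a := by positivity
  have step1 : (∫ t in Set.Ioo 0 δ, min 1 ((t / (π / 2 * a)) ^ m) / t ^ 2)
      ≤ ∫ θ in Set.Ioo 0 δ, min 1 ((|Real.sin θ| / a) ^ m) / Real.sin θ ^ 2 := by
    apply setIntegral_mono_on (g_integrableOn m _ δ hm ha')
      (f_integrableOn m a hm ha measurableSet_Ioo
        (fun x hx => ⟨by nlinarith [hx.1], by nlinarith [hx.2]⟩))
      measurableSet_Ioo
    rintro θ ⟨h0, hθδ⟩
    have hθ2 : θ ≤ π / 2 := by linarith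
    have hsin_l : 2 / π * θ ≤ Real.sin θ := Real.mul_le_sin h0.le hθ2
    have hsin_u : Real.sin θ ≤ θ := Real.sin_le h0.le
    have hsin_pos : 0 < Real.sin θ := by
      have : (0:ℝ) < 2 / π * θ := by positivity
      linarith
    rw [abs_of_pos hsin_pos]
    have hda : θ / (π / 2 * a) ≤ Real.sin θ / a := by
      rw [div_le_div_iff₀ ha' ha]
      have h5 := mul_le_mul_of_nonneg_right hsin_l (by positivity : (0:ℝ) ≤ π / 2 * a)
      have e : 2 / π * θ * (π / 2 * a) = θ * a := by field_simp
      rw [e] at h5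
      linarith
    have hnum : min 1 ((θ / (π / 2 * a)) ^ m) ≤ min 1 ((Real.sin θ / a) ^ m) :=
      min_le_min le_rfl (Real.rpow_le_rpow (by positivity) hda (by linarith))
    have hden : Real.sin θ ^ 2 ≤ θ ^ 2 := by nlinarith
    exact div_le_div₀ (le_min zero_le_one (Real.rpow_nonneg (by positivity) m)) hnum
      (by positivity) hden
  have step2 : (∫ θ in Set.Ioo 0 δ, min 1 ((|Real.sin θ| / a) ^ m) / Real.sin θ ^ 2)
      ≤ ∫ θ in {θ : ℝ | θ ∈ Set.Ioo (-π) π ∧ |Real.sin θ| < δ},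
          min 1 ((|Real.sin θ| / a) ^ m) / Real.sin θ ^ 2 :=
    setIntegral_mono_set (f_integrableOn m a hm ha (S_measurable δ) (S_sub δ))
      (Filter.Eventually.of_forall (f_nonneg m ha.le))
      (HasSubset.Subset.eventuallyLE hsub1)
  have hG := (G_bounds m (π / 2 * a) δ hm ha' hδ).1
  have hscale : (m - 1)⁻¹ * (2 / π) ^ m * (a⁻¹ * min 1 ((δ / a) ^ (m - 1)))
      ≤ (m - 1)⁻¹ * (π / 2 * a)⁻¹ * min 1 ((δ / (π / 2 * a)) ^ (m - 1)) := by
    have e1 : δ / (π / 2 * a) = 2 / π * (δ / a) := by field_simp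
    have e2 : (δ / (π / 2 * a)) ^ (m - 1) = (2 / π) ^ (m - 1) * (δ / a) ^ (m - 1) := by
      rw [e1, Real.mul_rpow (by positivity) (by positivity)]
    have e3 : (π / 2 * a)⁻¹ = 2 / π * a⁻¹ := by field_simp
    have e4 : (2 / π) ^ m = 2 / π * (2 / π) ^ (m - 1) := by
      rw [Real.rpow_sub (by positivity), Real.rpow_one]
      field_simp
    have hk0 : (0:ℝ) ≤ (2 / π) ^ (m - 1) := Real.rpow_nonneg (by positivity) _
    have hk1 : (2 / π) ^ (m - 1) ≤ 1 :=
      Real.rpow_le_one (by positivity) (by rw [div_le_one hπ]; linarith) (by linarith)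
    have hmin := min_scale_le hk0 hk1
      (Real.rpow_nonneg (by positivity : (0:ℝ) ≤ δ / a) (m - 1))
    calc (m - 1)⁻¹ * (2 / π) ^ m * (a⁻¹ * min 1 ((δ / a) ^ (m - 1)))
        = ((m - 1)⁻¹ * (2 / π) * a⁻¹) * ((2 / π) ^ (m - 1) * min 1 ((δ / a) ^ (m - 1))) := by
          rw [e4]; ring
      _ ≤ ((m - 1)⁻¹ * (2 / π) * a⁻¹) * min 1 ((2 / π) ^ (m - 1) * (δ / a) ^ (m - 1)) := by
          apply mul_le_mul_of_nonneg_left hmin (by positivity)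
      _ = (m - 1)⁻¹ * (π / 2 * a)⁻¹ * min 1 ((δ / (π / 2 * a)) ^ (m - 1)) := by
          rw [e2, e3]; ring
  calc (m - 1)⁻¹ * (2 / π) ^ m * a⁻¹ * min 1 ((δ / a) ^ (m - 1))
      = (m - 1)⁻¹ * (2 / π) ^ m * (a⁻¹ * min 1 ((δ / a) ^ (m - 1))) := by ring
    _ ≤ (m - 1)⁻¹ * (π / 2 * a)⁻¹ * min 1 ((δ / (π / 2 * a)) ^ (m - 1)) := hscale
    _ ≤ _ := le_trans hG (le_trans step1 step2)

lemma half_pi_bound {u δ : ℝ} (h : 2 / π * u < δ) : u < π / 2 * δ := by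
  have hπ := Real.pi_pos
  have h2 := mul_lt_mul_of_pos_left h hπ
  rw [show π * (2 / π * u) = 2 * u by field_simp] at h2
  linarith

set_option maxHeartbeats 1000000 in
lemma f_upper (m : ℝ) (hm : 2 ≤ m) (a δ : ℝ) (ha : 0 < a) (hδ : 0 < δ) (hδ1 : δ ≤ 1) :
    (∫ θ in {θ : ℝ | θ ∈ Set.Ioo (-π) π ∧ |Real.sin θ| < δ},
        min 1 ((|Real.sin θ| / a) ^ m) / Real.sin θ ^ 2) ≤
      π ^ 2 * (m / (m - 1)) * (π / 2) ^ (m - 1) * a⁻¹ * min 1 ((δ / a) ^ (m - 1)) := by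
  have hm1 : (0:ℝ) < m - 1 := by linarith
  have hπ : (0:ℝ) < π := Real.pi_pos
  have hπ3 : (3:ℝ) < π := Real.pi_gt_three
  have hπ4 : π < 3.15 := Real.pi_lt_d2
  set f := fun θ : ℝ => min 1 ((|Real.sin θ| / a) ^ m) / Real.sin θ ^ 2 with hfdef
  set b := π / 2 * δ with hbdef
  have hb : 0 < b := by positivity
  have hbπ : b ≤ π / 2 := by rw [hbdef]; nlinarith
  have hπb : π / 2 ≤ π - b := by linarith
  set E0 := Set.Ioo (-b) (0:ℝ) with hE0def
  set E1 := Set.Ioo (0:ℝ) b with hE1def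
  set E2 := Set.Ioo (π - b) π with hE2def
  set E3 := Set.Ioo (-π) (-π + b) with hE3def
  have hfeven : ∀ x : ℝ, f (-x) = f x := by
    intro x; simp only [hfdef, Real.sin_neg, abs_neg, neg_sq]
  have hfpi : ∀ x : ℝ, f (π - x) = f x := by
    intro x; simp only [hfdef, Real.sin_pi_sub]
  have hfpi' : ∀ x : ℝ, f (x - π) = f x := by
    intro x
    simp only [hfdef]
    rw [show Real.sin (x - π) = -Real.sin x by simp [Real.sin_sub], abs_neg, neg_sq]
  have hcov : {θ : ℝ | θ ∈ Set.Ioo (-π) π ∧ |Real.sin θ| < δ}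
      ⊆ (((E0 ∪ E1) ∪ E2) ∪ E3) ∪ {0} := by
    rintro θ ⟨⟨hθl, hθr⟩, hθδ⟩
    rcases lt_trichotomy θ 0 with hneg | h0 | hpos
    · have hsθ : |Real.sin θ| = Real.sin (-θ) := by
        rw [Real.sin_neg,
          abs_of_nonpos (Real.sin_nonpos_of_nonpos_of_neg_pi_le hneg.le hθl.le)]
      rw [hsθ] at hθδ
      rcases le_or_gt (-θ) (π / 2) with hc | hc
      · refine Or.inl (Or.inl (Or.inl (Or.inl ?_)))
        have h5 := Real.mul_le_sin (by linarith : (0:ℝ) ≤ -θ) hc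
        have h6 := half_pi_bound (lt_of_le_of_lt h5 hθδ)
        exact ⟨by linarith, hneg⟩
      · refine Or.inl (Or.inr ?_)
        have hu0 : (0:ℝ) ≤ π + θ := by linarith
        have hu2 : π + θ ≤ π / 2 := by linarith
        have h5 := Real.mul_le_sin hu0 hu2
        rw [show Real.sin (π + θ) = Real.sin (-θ) by
          rw [← Real.sin_pi_sub (π + θ)]; congr 1; ring] at h5
        have h6 := half_pi_bound (lt_of_le_of_lt h5 hθδ)
        exact ⟨hθl, by linarith⟩
    · exact Or.inr (by simp [h0])
    · have hsθ : |Real.sin θ| = Real.sin θ :=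
        abs_of_nonneg (Real.sin_nonneg_of_nonneg_of_le_pi hpos.le hθr.le)
      rw [hsθ] at hθδ
      rcases le_or_gt θ (π / 2) with hc | hc
      · refine Or.inl (Or.inl (Or.inl (Or.inr ?_)))
        have h5 := Real.mul_le_sin hpos.le hc
        have h6 := half_pi_bound (lt_of_le_of_lt h5 hθδ)
        exact ⟨hpos, by linarith⟩
      · refine Or.inl (Or.inl (Or.inr ?_))
        have hu0 : (0:ℝ) ≤ π - θ := by linarith
        have hu2 : π - θ ≤ π / 2 := by linarith
        have h5 := Real.mul_le_sin hu0 hu2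
        rw [Real.sin_pi_sub] at h5
        have h6 := half_pi_bound (lt_of_le_of_lt h5 hθδ)
        exact ⟨by linarith, hθr⟩
  have hiE0 : IntegrableOn f E0 := f_integrableOn m a hm ha measurableSet_Ioo
    (fun x hx => ⟨by nlinarith [hx.1], by nlinarith [hx.2]⟩)
  have hiE1 : IntegrableOn f E1 := f_integrableOn m a hm ha measurableSet_Ioo
    (fun x hx => ⟨by nlinarith [hx.1], by nlinarith [hx.2]⟩)
  have hiE2 : IntegrableOn f E2 := f_integrableOn m a hm ha measurableSet_Ioo
    (fun x hx => ⟨by nlinarith [hx.1], by nlinarith [hx.2]⟩)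
  have hiE3 : IntegrableOn f E3 := f_integrableOn m a hm ha measurableSet_Ioo
    (fun x hx => ⟨by nlinarith [hx.1], by nlinarith [hx.2]⟩)
  have hi0 : IntegrableOn f ({0} : Set ℝ) := f_integrableOn m a hm ha
    (measurableSet_singleton 0)
    (by rintro x hx
        rw [Set.mem_singleton_iff] at hx
        subst hx
        constructor <;> norm_num)
  have hiU : IntegrableOn f ((((E0 ∪ E1) ∪ E2) ∪ E3) ∪ {0}) :=
    (((hiE0.union hiE1).union hiE2).union hiE3).union hi0
  have hstepU : (∫ θ in {θ : ℝ | θ ∈ Set.Ioo (-π) π ∧ |Real.sin θ| < δ}, f θ)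
      ≤ ∫ θ in (((E0 ∪ E1) ∪ E2) ∪ E3) ∪ {0}, f θ :=
    setIntegral_mono_set hiU (Filter.Eventually.of_forall (f_nonneg m ha.le))
      (HasSubset.Subset.eventuallyLE hcov)
  have d01 : Disjoint E0 E1 := by
    rw [Set.disjoint_left]; rintro x ⟨_, h2⟩ ⟨h3, _⟩; linarith
  have d012 : Disjoint (E0 ∪ E1) E2 := by
    rw [Set.disjoint_left]
    rintro x (⟨_, h2⟩ | ⟨_, h2⟩) ⟨h3, _⟩ <;> nlinarith
  have d0123 : Disjoint ((E0 ∪ E1) ∪ E2) E3 := by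
    rw [Set.disjoint_left]
    rintro x ((⟨h1, _⟩ | ⟨h1, _⟩) | ⟨h1, _⟩) ⟨_, h4⟩ <;> nlinarith
  have dU0 : Disjoint (((E0 ∪ E1) ∪ E2) ∪ E3) ({0} : Set ℝ) := by
    rw [Set.disjoint_right]
    rintro x hx
    rw [Set.mem_singleton_iff] at hx; subst hx
    rintro (((⟨h1, h2⟩ | ⟨h1, h2⟩) | ⟨h1, h2⟩) | ⟨h1, h2⟩) <;> nlinarith
  have hsplitU : (∫ θ in (((E0 ∪ E1) ∪ E2) ∪ E3) ∪ {0}, f θ)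
      = (∫ θ in E0, f θ) + (∫ θ in E1, f θ) + (∫ θ in E2, f θ) + (∫ θ in E3, f θ) := by
    rw [MeasureTheory.setIntegral_union dU0 (measurableSet_singleton 0)
        (((hiE0.union hiE1).union hiE2).union hiE3) hi0,
      MeasureTheory.setIntegral_union d0123 measurableSet_Ioo
        ((hiE0.union hiE1).union hiE2) hiE3,
      MeasureTheory.setIntegral_union d012 measurableSet_Ioo (hiE0.union hiE1) hiE2,
      MeasureTheory.setIntegral_union d01 measurableSet_Ioo hiE0 hiE1,
      show volume.restrict ({0}:Set ℝ) = 0 from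
        Measure.restrict_eq_zero.mpr Real.volume_singleton,
      integral_zero_measure]
    ring
  have hE0eq : (∫ θ in E0, f θ) = ∫ θ in E1, f θ := by
    have h1 : (∫ x in (0:ℝ)..b, f (-x)) = ∫ x in -b..(0:ℝ), f x := by
      simpa using intervalIntegral.integral_comp_neg (a := 0) (b := b) f
    have h2 : (∫ x in (0:ℝ)..b, f (-x)) = ∫ x in (0:ℝ)..b, f x :=
      intervalIntegral.integral_congr (fun x _ => hfeven x)
    calc (∫ θ in E0, f θ) = ∫ x in -b..(0:ℝ), f x := by
          rw [intervalIntegral.integral_of_le (by linarith : -b ≤ (0:ℝ)),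
            MeasureTheory.integral_Ioc_eq_integral_Ioo]
      _ = ∫ x in (0:ℝ)..b, f x := by rw [← h1, h2]
      _ = ∫ θ in E1, f θ := by
          rw [intervalIntegral.integral_of_le hb.le,
            MeasureTheory.integral_Ioc_eq_integral_Ioo]
  have hE2eq : (∫ θ in E2, f θ) = ∫ θ in E1, f θ := by
    have h1 : (∫ x in (0:ℝ)..b, f (π - x)) = ∫ x in (π - b)..π, f x := by
      simpa using intervalIntegral.integral_comp_sub_left (a := 0) (b := b) f π
    have h2 : (∫ x in (0:ℝ)..b, f (π - x)) = ∫ x in (0:ℝ)..b, f x :=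
      intervalIntegral.integral_congr (fun x _ => hfpi x)
    calc (∫ θ in E2, f θ) = ∫ x in (π - b)..π, f x := by
          rw [intervalIntegral.integral_of_le (by linarith : π - b ≤ π),
            MeasureTheory.integral_Ioc_eq_integral_Ioo]
      _ = ∫ x in (0:ℝ)..b, f x := by rw [← h1, h2]
      _ = ∫ θ in E1, f θ := by
          rw [intervalIntegral.integral_of_le hb.le,
            MeasureTheory.integral_Ioc_eq_integral_Ioo]
  have hE3eq : (∫ θ in E3, f θ) = ∫ θ in E1, f θ := by
    have h1 : (∫ x in (0:ℝ)..b, f (x - π)) = ∫ x in -π..(b - π), f x := by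
      simpa using intervalIntegral.integral_comp_sub_right (a := 0) (b := b) f π
    have h2 : (∫ x in (0:ℝ)..b, f (x - π)) = ∫ x in (0:ℝ)..b, f x :=
      intervalIntegral.integral_congr (fun x _ => hfpi' x)
    calc (∫ θ in E3, f θ) = ∫ x in -π..(b - π), f x := by
          rw [hE3def, show -π + b = b - π by ring,
            intervalIntegral.integral_of_le (by linarith : -π ≤ b - π),
            MeasureTheory.integral_Ioc_eq_integral_Ioo]
      _ = ∫ x in (0:ℝ)..b, f x := by rw [← h1, h2]
      _ = ∫ θ in E1, f θ := by
          rw [intervalIntegral.integral_of_le hb.le,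
            MeasureTheory.integral_Ioc_eq_integral_Ioo]
  have hE1bound : (∫ θ in E1, f θ)
      ≤ π ^ 2 / 4 * ∫ t in Set.Ioo 0 b, min 1 ((t / a) ^ m) / t ^ 2 := by
    rw [← integral_const_mul]
    apply setIntegral_mono_on hiE1 ((g_integrableOn m a b hm ha).const_mul _)
      measurableSet_Ioo
    rintro θ ⟨h0, hθb⟩
    have hθ2 : θ ≤ π / 2 := le_trans hθb.le hbπ
    have hsin_l := Real.mul_le_sin h0.le hθ2
    have hsin_u := Real.sin_le h0.le
    have hsin_pos : 0 < Real.sin θ := by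
      have : (0:ℝ) < 2 / π * θ := by positivity
      linarith
    simp only [hfdef]
    rw [abs_of_pos hsin_pos]
    have hnum : min 1 ((Real.sin θ / a) ^ m) ≤ min 1 ((θ / a) ^ m) :=
      min_le_min le_rfl (Real.rpow_le_rpow (by positivity) (by gcongr) (by linarith))
    have hden : (2 / π * θ) ^ 2 ≤ Real.sin θ ^ 2 :=
      pow_le_pow_left₀ (by positivity) hsin_l 2
    have e : π ^ 2 / 4 * (min 1 ((θ / a) ^ m) / θ ^ 2)
        = min 1 ((θ / a) ^ m) / (2 / π * θ) ^ 2 := by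
      rw [show (2 / π * θ) ^ 2 = 4 / π ^ 2 * θ ^ 2 by ring]
      field_simp
    calc min 1 ((Real.sin θ / a) ^ m) / Real.sin θ ^ 2
        ≤ min 1 ((θ / a) ^ m) / (2 / π * θ) ^ 2 :=
          div_le_div₀ (le_min zero_le_one (Real.rpow_nonneg (by positivity) m)) hnum
            (by positivity) hden
      _ = π ^ 2 / 4 * (min 1 ((θ / a) ^ m) / θ ^ 2) := e.symm
  have hGu := (G_bounds m a b hm ha hb).2
  have hscale2 : min 1 ((b / a) ^ (m - 1)) ≤ (π / 2) ^ (m - 1) * min 1 ((δ / a) ^ (m - 1)) := by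
    have e1 : b / a = π / 2 * (δ / a) := by rw [hbdef]; ring
    rw [e1, Real.mul_rpow (by positivity) (by positivity)]
    exact min_scale_ge (Real.one_le_rpow (by linarith) (by linarith))
      (Real.rpow_nonneg (by positivity) _)
  calc (∫ θ in {θ : ℝ | θ ∈ Set.Ioo (-π) π ∧ |Real.sin θ| < δ}, f θ)
      ≤ (∫ θ in E0, f θ) + (∫ θ in E1, f θ) + (∫ θ in E2, f θ) + (∫ θ in E3, f θ) := by
        rw [← hsplitU]; exact hstepU
    _ = 4 * ∫ θ in E1, f θ := by rw [hE0eq, hE2eq, hE3eq]; ring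
    _ ≤ 4 * (π ^ 2 / 4 * ∫ t in Set.Ioo 0 b, min 1 ((t / a) ^ m) / t ^ 2) := by
        linarith
    _ = π ^ 2 * ∫ t in Set.Ioo 0 b, min 1 ((t / a) ^ m) / t ^ 2 := by ring
    _ ≤ π ^ 2 * (m / (m - 1) * a⁻¹ * min 1 ((b / a) ^ (m - 1))) := by
        apply mul_le_mul_of_nonneg_left hGu (by positivity)
    _ ≤ π ^ 2 * (m / (m - 1) * a⁻¹ * ((π / 2) ^ (m - 1) * min 1 ((δ / a) ^ (m - 1)))) := by
        apply mul_le_mul_of_nonneg_left _ (by positivity)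
        apply mul_le_mul_of_nonneg_left hscale2 (by positivity)
    _ = π ^ 2 * (m / (m - 1)) * (π / 2) ^ (m - 1) * a⁻¹ * min 1 ((δ / a) ^ (m - 1)) := by
        ring


/-- **Lemma 8.6.** For `m ≥ 2` there are constants `0 < c_m ≤ C_m` such that for
all `a > 0` and `0 < δ ≤ 1`, the integral
`∫_{θ ∈ (-π,π), |sin θ| < δ} min(1,(|sin θ|/a)^m) sin⁻²θ dθ` is bounded below by
`c_m a⁻¹ min(1,(δ/a)^{m-1})` and above by `C_m a⁻¹ min(1,(δ/a)^{m-1})`. -/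
theorem sine_integral_two_sided_bound (m : ℝ) (hm : 2 ≤ m) :
    ∃ c C : ℝ, 0 < c ∧ c ≤ C ∧ ∀ a δ : ℝ, 0 < a → 0 < δ → δ ≤ 1 →
      c * a⁻¹ * min 1 ((δ / a) ^ (m - 1)) ≤
        (∫ θ in {θ : ℝ | θ ∈ Set.Ioo (-Real.pi) Real.pi ∧ |Real.sin θ| < δ},
          min 1 ((|Real.sin θ| / a) ^ m) / Real.sin θ ^ 2) ∧
      (∫ θ in {θ : ℝ | θ ∈ Set.Ioo (-Real.pi) Real.pi ∧ |Real.sin θ| < δ},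
          min 1 ((|Real.sin θ| / a) ^ m) / Real.sin θ ^ 2) ≤
        C * a⁻¹ * min 1 ((δ / a) ^ (m - 1)) := by
  have hm1 : (0:ℝ) < m - 1 := by linarith
  have hπ : (0:ℝ) < π := Real.pi_pos
  have hπ3 : (3:ℝ) < π := Real.pi_gt_three
  refine ⟨(m - 1)⁻¹ * (2 / π) ^ m, π ^ 2 * (m / (m - 1)) * (π / 2) ^ (m - 1), by positivity,
    ?_, ?_⟩
  · have h1 : ((2:ℝ) / π) ^ m ≤ 1 :=
      Real.rpow_le_one (by positivity) (by rw [div_le_one hπ]; linarith) (by linarith)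
    have h2 : (1:ℝ) ≤ (π / 2) ^ (m - 1) :=
      Real.one_le_rpow (by linarith) (by linarith)
    have h4 : (m - 1)⁻¹ ≤ m / (m - 1) := by
      rw [div_eq_mul_inv]
      nlinarith [inv_pos.mpr hm1]
    have h6 : (m - 1)⁻¹ * (2 / π) ^ m ≤ (m - 1)⁻¹ := by
      nlinarith [inv_pos.mpr hm1, Real.rpow_nonneg (by positivity : (0:ℝ) ≤ 2 / π) m]
    have h7 : m / (m - 1) ≤ π ^ 2 * (m / (m - 1)) * (π / 2) ^ (m - 1) := by
      calc m / (m - 1) ≤ π ^ 2 * (m / (m - 1)) :=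
            le_mul_of_one_le_left (by positivity) (by nlinarith)
        _ ≤ π ^ 2 * (m / (m - 1)) * (π / 2) ^ (m - 1) :=
            le_mul_of_one_le_right (by positivity) h2
    linarith
  intro a δ ha hδ hδ1
  exact ⟨f_lower m hm a δ ha hδ hδ1, f_upper m hm a δ ha hδ hδ1⟩

end
end

section
/- For every ε > 0 there exists a constant C_ε > 0 such that for every X > 0 and every α ∈ ℝ: ∑_{ℓ=1}^∞ ℓ^{ε−1} · 𝔐¹_{ℓα}(X/ℓ) ≤ C_ε · 𝔐_α^{1,2ε}(X). -/
/-!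
The `n`-th term of `𝔐¹_{ℓα}(X/ℓ)` is `ℓ` times the `ℓn`-th term `t_{ℓn}` of `𝔐¹_α(X)`, so
grouping the pairs `(ℓ, n)` by `m = ℓn` turns the left side into `∑_m (∑_{ℓ ∣ m} ℓ^ε) t_m`.
By the divisor bound `d(m) ≪_ε m^ε`, the inner sum is `≪_ε m^{2ε}`.
-/

open Real
open scoped ENNReal

noncomputable section

/-- `log⁺(t) = max(0, log t)`. -/
def logp (t : ℝ) : ℝ := max 0 (Real.log t)

/-- `𝔐_α^{1,ε}(X) = ∑_{n≥1} n^ε min(X/n², 1/(n⟨nα⟩)) (1 + log⁺(X⟨nα⟩/n))`,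
computed in `[0,∞]` (a term with `⟨nα⟩ = 0` being read as `n^ε X/n²`). -/
def frakM1E (α X ε : ℝ) : ℝ≥0∞ :=
  ∑' n : ℕ+, ENNReal.ofReal (((n : ℕ) : ℝ) ^ ε *
    (if nint (((n : ℕ) : ℝ) * α) = 0 then X / ((n : ℕ) : ℝ) ^ 2
     else min (X / ((n : ℕ) : ℝ) ^ 2)
       (1 / (((n : ℕ) : ℝ) * nint (((n : ℕ) : ℝ) * α)))) *
    (1 + logp (X * nint (((n : ℕ) : ℝ) * α) / ((n : ℕ) : ℝ))))

open Finset

theorem exists_add_one_le_mul_pow {b : ℝ} (hb : 1 < b) :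
    ∃ B : ℝ, ∀ a : ℕ, (a : ℝ) + 1 ≤ B * b ^ a := by
  have hs : 0 < Real.log b := Real.log_pos hb
  refine ⟨Real.exp (Real.log b - 1) / Real.log b, fun a => ?_⟩
  have hpow : b ^ a = Real.exp (a * Real.log b) := by
    rw [Real.exp_nat_mul, Real.exp_log (by linarith)]
  have h := Real.add_one_le_exp ((a + 1) * Real.log b - 1)
  rw [div_mul_eq_mul_div, le_div_iff₀ hs, hpow, ← Real.exp_add]
  rw [show (a + 1) * Real.log b - 1 = Real.log b - 1 + a * Real.log b by ring] at h
  linarith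

/-- Only the finitely many bases `p < K` need the constant `B`; for `p ≥ K` one has
`p ^ ε ≥ 2` and `a + 1 ≤ 2 ^ a`. -/
theorem exists_add_one_le_ite_mul_pow_rpow {ε : ℝ} (hε : 0 < ε) :
    ∃ B : ℝ, 1 ≤ B ∧ ∃ K : ℕ, ∀ p : ℕ, 2 ≤ p → ∀ a : ℕ,
      (a : ℝ) + 1 ≤ (if p < K then B else 1) * ((p : ℝ) ^ a) ^ ε := by
  obtain ⟨B, hB⟩ := exists_add_one_le_mul_pow (Real.one_lt_rpow one_lt_two hε)
  have hB1 : 1 ≤ B := by simpa using hB 0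
  refine ⟨B, hB1, ⌈(2 : ℝ) ^ ε⁻¹⌉₊, fun p hp a => ?_⟩
  rw [← Real.rpow_pow_comm (Nat.cast_nonneg p)]
  split_ifs with hpK
  · calc (a : ℝ) + 1 ≤ B * ((2 : ℝ) ^ ε) ^ a := hB a
      _ ≤ B * ((p : ℝ) ^ ε) ^ a := by
        gcongr
        exact_mod_cast hp
  · have h2 : (2 : ℝ) ≤ (p : ℝ) ^ ε := by
      calc (2 : ℝ) = ((2 : ℝ) ^ ε⁻¹) ^ ε := by
            rw [← Real.rpow_mul zero_le_two, inv_mul_cancel₀ hε.ne', Real.rpow_one]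
        _ ≤ (p : ℝ) ^ ε := by
          gcongr
          exact (Nat.le_ceil _).trans (by exact_mod_cast not_lt.mp hpK)
    calc (a : ℝ) + 1 ≤ 2 ^ a := by exact_mod_cast Nat.lt_two_pow_self
      _ ≤ 1 * ((p : ℝ) ^ ε) ^ a := by rw [one_mul]; gcongr

theorem Nat.exists_card_divisors_le_mul_rpow {ε : ℝ} (hε : 0 < ε) :
    ∃ C : ℝ, ∀ m : ℕ, m ≠ 0 → (#m.divisors : ℝ) ≤ C * (m : ℝ) ^ ε := by
  obtain ⟨B, hB1, K, hB⟩ := exists_add_one_le_ite_mul_pow_rpow hε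
  refine ⟨B ^ K, fun m hm => ?_⟩
  have hconst : ∏ p ∈ m.primeFactors, (if p < K then B else 1) ≤ B ^ K := by
    rw [← prod_filter, prod_const]
    refine pow_le_pow_right₀ hB1 ((card_le_card fun p hp => ?_).trans_eq (card_range K))
    simpa using (mem_filter.mp hp).2
  calc (#m.divisors : ℝ) = ∏ p ∈ m.primeFactors, ((m.factorization p : ℝ) + 1) := by
        rw [Nat.card_divisors hm]; push_cast; rfl
    _ ≤ ∏ p ∈ m.primeFactors,
          (if p < K then B else 1) * ((p : ℝ) ^ m.factorization p) ^ ε :=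
        prod_le_prod (fun _ _ => by positivity)
          fun p hp => hB p (Nat.prime_of_mem_primeFactors hp).two_le _
    _ = (∏ p ∈ m.primeFactors, (if p < K then B else 1)) *
          (∏ p ∈ m.primeFactors, (p : ℝ) ^ m.factorization p) ^ ε := by
        rw [prod_mul_distrib, Real.finsetProd_rpow _ _ fun _ _ => by positivity]
    _ ≤ B ^ K * (m : ℝ) ^ ε := by
        have hprod : ∏ p ∈ m.primeFactors, (p : ℝ) ^ m.factorization p = m := by
          exact_mod_cast (Nat.prod_primeFactors_pow_factorization hm).symm
        rw [hprod]
        gcongr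

theorem Nat.exists_sum_divisors_rpow_le {ε : ℝ} (hε : 0 < ε) :
    ∃ C : ℝ, 0 < C ∧ ∀ m : ℕ, m ≠ 0 → ∑ d ∈ m.divisors, (d : ℝ) ^ ε ≤ C * (m : ℝ) ^ (2 * ε) := by
  obtain ⟨C, hC⟩ := Nat.exists_card_divisors_le_mul_rpow hε
  refine ⟨C, zero_lt_one.trans_le (by simpa using hC 1 one_ne_zero), fun m hm => ?_⟩
  calc ∑ d ∈ m.divisors, (d : ℝ) ^ ε ≤ ∑ _d ∈ m.divisors, (m : ℝ) ^ ε :=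
        sum_le_sum fun d hd => by gcongr; exact_mod_cast Nat.divisor_le hd
    _ = #m.divisors * (m : ℝ) ^ ε := by rw [sum_const, nsmul_eq_mul]
    _ ≤ C * (m : ℝ) ^ ε * (m : ℝ) ^ ε := by gcongr; exact hC m hm
    _ = C * (m : ℝ) ^ (2 * ε) := by
        rw [two_mul, Real.rpow_add' (Nat.cast_nonneg m) (by positivity)]; ring

def frakM1Term (α X N : ℝ) : ℝ :=
  (if nint (N * α) = 0 then X / N ^ 2 else min (X / N ^ 2) (1 / (N * nint (N * α)))) *
    (1 + logp (X * nint (N * α) / N))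

theorem frakM1E_eq_tsum (α X ε : ℝ) :
    frakM1E α X ε = ∑' n : ℕ+, ENNReal.ofReal (((n : ℕ) : ℝ) ^ ε * frakM1Term α X (n : ℕ)) := by
  simp only [frakM1E, frakM1Term, mul_assoc]

theorem frakM1Term_mul_div {L : ℝ} (hL : 0 < L) (α X N : ℝ) :
    frakM1Term (L * α) (X / L) N = L * frakM1Term α X (L * N) := by
  simp only [frakM1Term, show N * (L * α) = L * N * α by ring]
  set d := nint (L * N * α)
  have hlog : X / L * d / N = X * d / (L * N) := by field_simp
  rw [hlog, ← mul_assoc]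
  congr 1
  split_ifs
  · field_simp
  · rw [mul_min_of_nonneg _ _ hL.le]
    congr 1 <;> field_simp

theorem ENNReal.tsum_tsum_pnat_mul_eq_tsum_sum_divisors (g h : ℕ → ℝ≥0∞) :
    ∑' (l : ℕ+) (n : ℕ+), g l * h (l * n) =
      ∑' m : ℕ+, (∑ d ∈ (m : ℕ).divisors, g d) * h m := by
  rw [← ENNReal.tsum_prod' (f := fun p : ℕ+ × ℕ+ => g p.1 * h (p.1 * p.2)),
    ← sigmaAntidiagonalEquivProd.tsum_eq, ENNReal.tsum_sigma']
  refine tsum_congr fun m => ?_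
  refine (Finset.tsum_subtype _ fun p : ℕ × ℕ => g p.1 * h (p.1 * p.2)).trans ?_
  rw [sum_mul, ← Nat.sum_divisorsAntidiagonal fun a _ => g a * h m]
  refine sum_congr rfl fun p hp => ?_
  rw [(Nat.mem_divisorsAntidiagonal.mp hp).1]

theorem rpow_sub_one_mul_frakM1E_mul_div (ε α X : ℝ) (l : ℕ+) :
    ENNReal.ofReal (((l : ℕ) : ℝ) ^ (ε - 1)) * frakM1E (((l : ℕ) : ℝ) * α) (X / ((l : ℕ) : ℝ)) 0 =
      ∑' n : ℕ+, ENNReal.ofReal (((l : ℕ) : ℝ) ^ ε) *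
        ENNReal.ofReal (frakM1Term α X (((l : ℕ) * (n : ℕ) : ℕ) : ℝ)) := by
  have hl : (0 : ℝ) < (l : ℕ) := by exact_mod_cast l.pos
  rw [frakM1E_eq_tsum, ← ENNReal.tsum_mul_left]
  refine tsum_congr fun n => ?_
  rw [Real.rpow_zero, one_mul, frakM1Term_mul_div hl, ← ENNReal.ofReal_mul (by positivity),
    ← mul_assoc, ← Real.rpow_add_one hl.ne', sub_add_cancel, ENNReal.ofReal_mul (by positivity),
    Nat.cast_mul]

/-- **Lemma 8.7.** `∑_{ℓ≥1} ℓ^{ε-1} 𝔐¹_{ℓα}(X/ℓ) ≤ C_ε 𝔐_α^{1,2ε}(X)`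
(where `𝔐¹_α = 𝔐_α^{1,0}`), the sums being computed in `[0,∞]`. -/
theorem frakM1_rescaled_sum_bound (ε : ℝ) (hε : 0 < ε) :
    ∃ C : ℝ, 0 < C ∧ ∀ X α : ℝ, 0 < X →
      (∑' l : ℕ+, ENNReal.ofReal (((l : ℕ) : ℝ) ^ (ε - 1)) *
          frakM1E (((l : ℕ) : ℝ) * α) (X / ((l : ℕ) : ℝ)) 0) ≤
        ENNReal.ofReal C * frakM1E α X (2 * ε) := by
  obtain ⟨C, hC0, hC⟩ := Nat.exists_sum_divisors_rpow_le hε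
  refine ⟨C, hC0, fun X α _ => ?_⟩
  simp_rw [rpow_sub_one_mul_frakM1E_mul_div]
  rw [ENNReal.tsum_tsum_pnat_mul_eq_tsum_sum_divisors (fun d => ENNReal.ofReal ((d : ℝ) ^ ε))
    (fun m => ENNReal.ofReal (frakM1Term α X m)), frakM1E_eq_tsum, ← ENNReal.tsum_mul_left]
  refine ENNReal.tsum_le_tsum fun m => ?_
  rw [← ENNReal.ofReal_sum_of_nonneg fun _ _ => by positivity, ENNReal.ofReal_mul (by positivity),
    ← mul_assoc, ← ENNReal.ofReal_mul hC0.le]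
  gcongr
  exact hC m m.ne_zero

end
end
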